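/- arXiv:2506.09394 — 6 statements merged into one kernel-verified Lean document; each statement's English description precedes it below -/
import Mathlib

section
/- Let A ∈ ℝ^{m×n}, b ∈ ℝ^m with Ax = b consistent, B ∈ ℝ^{n×n} symmetric positive definite, Q ∈ ℝ^{d×m}, and let x^0 satisfy QAx^0 = Qb. Let x^{k+1} be the minimizer of ||x − x^k||_B over all x satisfying SAx = Sb and QAx = Qb, for a sketching matrix S ∈ ℝ^{ℓ×m}. Then x^{k+1} = x^k − B^{−1/2} P B^{−1/2} Aᵀ Sᵀ (S A B^{−1/2} P B^{−1/2} Aᵀ Sᵀ)† S (A x^k − b), where P := I − (Q A B^{−1/2})† Q A B^{−1/2} is the orthogonal projector onto the nullspace of Q A B^{−1/2}. -/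
open Matrix

/-- `Mp` is the Moore–Penrose pseudoinverse of `M` (the four Penrose conditions,
which characterize it uniquely). -/
def IsMoorePenrose {k l : Type*} [Fintype k] [Fintype l]
    (M : Matrix k l ℝ) (Mp : Matrix l k ℝ) : Prop :=
  M * Mp * M = M ∧ Mp * M * Mp = Mp ∧ (M * Mp)ᵀ = M * Mp ∧ (Mp * M)ᵀ = Mp * M

/-- The positive semidefinite square root of a positive semidefinite matrix, as defined in
Mathlib (Dec 2024) under this name (since removed from Mathlib). -/
noncomputable def Matrix.PosSemidef.sqrt {n : Type*} [Fintype n] [DecidableEq n]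
    {A : Matrix n n ℝ} (hA : A.PosSemidef) : Matrix n n ℝ :=
  (hA.1.eigenvectorUnitary : Matrix n n ℝ) * diagonal ((↑) ∘ (√·) ∘ hA.1.eigenvalues) *
  (star hA.1.eigenvectorUnitary : Matrix n n ℝ)

/-!
Substituting `x = xᵏ + B^{-1/2} u` turns the `B`-norm into the Euclidean norm and the
constraints into `K u = 0`, `M₀ u = c` with `K = QAB^{-1/2}`, `M₀ = SAB^{-1/2}`,
`c = S(b - Axᵏ)`. On `ker K = range P` the second constraint reads `M u = c` with
`M = M₀P`, whose least-norm solution is `Mᵀ(MMᵀ)†c = P M₀ᵀ (M₀PM₀ᵀ)† c`; it lies in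
`range P`, so it is also the least-norm solution of the constrained problem.
-/

namespace Matrix.PosSemidef

variable {n : Type*} [Fintype n] [DecidableEq n] {A : Matrix n n ℝ}

theorem sqrt_mul_self (hA : A.PosSemidef) : hA.sqrt * hA.sqrt = A := by
  set U : Matrix n n ℝ := (hA.1.eigenvectorUnitary : Matrix n n ℝ)
  set D : Matrix n n ℝ := diagonal ((↑) ∘ (√·) ∘ hA.1.eigenvalues)
  have hU : star U * U = 1 := Unitary.coe_star_mul_self _
  have hD : D * D = diagonal (RCLike.ofReal ∘ hA.1.eigenvalues) := by
    rw [diagonal_mul_diagonal]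
    congr 1
    funext i
    simp [Real.mul_self_sqrt (hA.eigenvalues_nonneg i)]
  conv_rhs => rw [hA.1.spectral_theorem, Unitary.conjStarAlgAut_apply]
  calc hA.sqrt * hA.sqrt = U * (D * (star U * U) * D) * star U := by
        simp only [Matrix.PosSemidef.sqrt, U, D, Matrix.mul_assoc]
    _ = _ := by rw [hU, Matrix.mul_one, hD]

theorem transpose_sqrt (hA : A.PosSemidef) : hA.sqrtᵀ = hA.sqrt := by
  rw [← conjTranspose_eq_transpose_of_trivial, Matrix.PosSemidef.sqrt, conjTranspose_mul,
    conjTranspose_mul, diagonal_conjTranspose, star_eq_conjTranspose,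
    conjTranspose_conjTranspose, Matrix.mul_assoc]
  congr 3

end Matrix.PosSemidef

namespace Matrix.PosDef

variable {n : Type*} [Fintype n] [DecidableEq n] {B : Matrix n n ℝ}

theorem isUnit_det_sqrt (hB : B.PosDef) : IsUnit hB.posSemidef.sqrt.det := by
  have hdet : IsUnit B.det := hB.det_pos.ne'.isUnit
  rw [← hB.posSemidef.sqrt_mul_self, det_mul] at hdet
  exact isUnit_of_mul_isUnit_left hdet

theorem transpose_inv_sqrt (hB : B.PosDef) :
    (hB.posSemidef.sqrt⁻¹)ᵀ = hB.posSemidef.sqrt⁻¹ := by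
  rw [transpose_nonsing_inv, hB.posSemidef.transpose_sqrt]

theorem inv_sqrt_mulVec_dotProduct_mulVec (hB : B.PosDef) (v : n → ℝ) :
    (hB.posSemidef.sqrt⁻¹ *ᵥ v) ⬝ᵥ (B *ᵥ (hB.posSemidef.sqrt⁻¹ *ᵥ v)) = v ⬝ᵥ v := by
  set H := hB.posSemidef.sqrt
  have hHBH : H⁻¹ * B * H⁻¹ = 1 := by
    rw [← hB.posSemidef.sqrt_mul_self, ← Matrix.mul_assoc, nonsing_inv_mul _ hB.isUnit_det_sqrt,
      Matrix.one_mul, mul_nonsing_inv _ hB.isUnit_det_sqrt]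
  rw [dotProduct_comm, dotProduct_mulVec, ← mulVec_transpose, hB.transpose_inv_sqrt,
    mulVec_mulVec, mulVec_mulVec, dotProduct_comm, hHBH, one_mulVec]

end Matrix.PosDef

namespace IsMoorePenrose

section Projector

variable {k n : Type*} [Fintype k] [Fintype n] [DecidableEq n] {K : Matrix k n ℝ}
  {N : Matrix n k ℝ}

theorem transpose_one_sub_mul (h : IsMoorePenrose K N) : (1 - N * K)ᵀ = 1 - N * K := by
  rw [transpose_sub, transpose_one, h.2.2.2]

theorem one_sub_mul_mul_self (h : IsMoorePenrose K N) :
    (1 - N * K) * (1 - N * K) = 1 - N * K := by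
  rw [sub_mul, Matrix.one_mul, mul_sub, Matrix.mul_one, Matrix.mul_assoc N K (N * K),
    ← Matrix.mul_assoc K, h.1, sub_self, sub_zero]

theorem mul_one_sub_mul (h : IsMoorePenrose K N) : K * (1 - N * K) = 0 := by
  rw [Matrix.mul_sub, Matrix.mul_one, ← Matrix.mul_assoc, h.1, sub_self]

theorem one_sub_mul_mulVec_of_mulVec_eq_zero {u : n → ℝ} (hu : K *ᵥ u = 0) :
    (1 - N * K) *ᵥ u = u := by
  rw [sub_mulVec, one_mulVec, ← mulVec_mulVec, hu, mulVec_zero, sub_zero]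

end Projector

section LeastNorm

variable {l n : Type*} [Fintype l] [DecidableEq l] [Fintype n] {M : Matrix l n ℝ} {N : Matrix l l ℝ}

theorem mul_transpose_mul_mul_self (h : IsMoorePenrose (M * Mᵀ) N) : M * Mᵀ * N * M = M := by
  have hG : (1 - M * Mᵀ * N) * (M * Mᵀ) = 0 := by
    rw [Matrix.sub_mul, Matrix.one_mul, h.1, sub_self]
  rw [← conjTranspose_eq_transpose_of_trivial, mul_self_mul_conjTranspose_eq_zero,
    Matrix.sub_mul, Matrix.one_mul, sub_eq_zero] at hG
  exact hG.symm

theorem mulVec_transpose_mul_mulVec (h : IsMoorePenrose (M * Mᵀ) N) {u : n → ℝ} :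
    M *ᵥ ((Mᵀ * N) *ᵥ (M *ᵥ u)) = M *ᵥ u := by
  rw [mulVec_mulVec, mulVec_mulVec, ← Matrix.mul_assoc, h.mul_transpose_mul_mul_self]

theorem eq_of_dotProduct_self_le (h : IsMoorePenrose (M * Mᵀ) N) {u : n → ℝ} {c : l → ℝ}
    (hu : M *ᵥ u = c) (hle : u ⬝ᵥ u ≤ ((Mᵀ * N) *ᵥ c) ⬝ᵥ ((Mᵀ * N) *ᵥ c)) :
    u = (Mᵀ * N) *ᵥ c := by
  subst hu
  set v := (Mᵀ * N) *ᵥ (M *ᵥ u) with hv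
  have hMv : M *ᵥ v = M *ᵥ u := h.mulVec_transpose_mul_mulVec
  have horth : v ⬝ᵥ (u - v) = 0 := by
    nth_rw 1 [hv]
    rw [← mulVec_mulVec, mulVec_transpose, ← dotProduct_mulVec, mulVec_sub, hMv, sub_self,
      dotProduct_zero]
  have hpyth : u ⬝ᵥ u = v ⬝ᵥ v + (u - v) ⬝ᵥ (u - v) := by
    conv_lhs => rw [← add_sub_cancel v u]
    rw [add_dotProduct, dotProduct_add, dotProduct_add, dotProduct_comm (u - v) v, horth]
    ring
  have hzero : (u - v) ⬝ᵥ (u - v) = 0 :=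
    le_antisymm (by linarith) (Finset.sum_nonneg fun i _ => mul_self_nonneg _)
  exact sub_eq_zero.mp (dotProduct_self_eq_zero.mp hzero)

end LeastNorm

/-- The least-norm solution of `M₀ u = c` on `ker K`, with `P = 1 - K†K` the projector onto
`ker K`, is `P M₀ᵀ (M₀ P M₀ᵀ)† c`. -/
theorem eq_of_forall_dotProduct_self_le {k l n : Type*} [Fintype k] [Fintype l] [DecidableEq l]
    [Fintype n] [DecidableEq n] {K : Matrix k n ℝ} {N₁ : Matrix n k ℝ} {M₀ : Matrix l n ℝ}
    {N₂ : Matrix l l ℝ} (hN₁ : IsMoorePenrose K N₁)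
    (hN₂ : IsMoorePenrose (M₀ * (1 - N₁ * K) * M₀ᵀ) N₂) {u : n → ℝ} {c : l → ℝ}
    (hKu : K *ᵥ u = 0) (hMu : M₀ *ᵥ u = c)
    (hmin : ∀ v, K *ᵥ v = 0 → M₀ *ᵥ v = c → u ⬝ᵥ u ≤ v ⬝ᵥ v) :
    u = ((1 - N₁ * K) * M₀ᵀ * N₂) *ᵥ c := by
  set P := 1 - N₁ * K
  have hPT : (M₀ * P)ᵀ = P * M₀ᵀ := by rw [transpose_mul, hN₁.transpose_one_sub_mul]
  have hgram : M₀ * P * (M₀ * P)ᵀ = M₀ * P * M₀ᵀ := by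
    rw [hPT, ← Matrix.mul_assoc, Matrix.mul_assoc M₀, hN₁.one_sub_mul_mul_self]
  rw [← hgram] at hN₂
  have hPu : P *ᵥ u = u := one_sub_mul_mulVec_of_mulVec_eq_zero hKu
  have hMPu : (M₀ * P) *ᵥ u = c := by rw [← mulVec_mulVec, hPu, hMu]
  rw [← hPT]
  refine hN₂.eq_of_dotProduct_self_le hMPu (hmin _ ?_ ?_)
  · rw [hPT, Matrix.mul_assoc, ← mulVec_mulVec, mulVec_mulVec, hN₁.mul_one_sub_mul,
      zero_mulVec]
  · have hPv : P *ᵥ ((P * M₀ᵀ * N₂) *ᵥ c) = (P * M₀ᵀ * N₂) *ᵥ c := by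
      rw [mulVec_mulVec, ← Matrix.mul_assoc, ← Matrix.mul_assoc, hN₁.one_sub_mul_mul_self]
    rw [hPT, ← hPv, mulVec_mulVec, ← hPT, ← hMPu, hN₂.mulVec_transpose_mul_mulVec]

end IsMoorePenrose

theorem stmt_0_general {m n d l : ℕ}
    (A : Matrix (Fin m) (Fin n) ℝ) (b : Fin m → ℝ)
    (B : Matrix (Fin n) (Fin n) ℝ) (hB : B.PosDef)
    (Q : Matrix (Fin d) (Fin m) ℝ) (S : Matrix (Fin l) (Fin m) ℝ)
    -- `Bih` is `B^{-1/2}`, the inverse of the positive definite square root of `B`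
    (Bih : Matrix (Fin n) (Fin n) ℝ) (hBih : Bih = (hB.posSemidef.sqrt)⁻¹)
    -- `N1 = (Q A B^{-1/2})†` and `P = I - N1 (Q A B^{-1/2})`
    (N1 : Matrix (Fin n) (Fin d) ℝ) (hN1 : IsMoorePenrose (Q * A * Bih) N1)
    (P : Matrix (Fin n) (Fin n) ℝ) (hP : P = 1 - N1 * (Q * A * Bih))
    -- `N2 = (S A B^{-1/2} P B^{-1/2} Aᵀ Sᵀ)†`
    (N2 : Matrix (Fin l) (Fin l) ℝ)
    (hN2 : IsMoorePenrose (S * A * Bih * P * Bih * Aᵀ * Sᵀ) N2)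
    -- the current iterate satisfies `Q A xk = Q b`
    (xk xk1 : Fin n → ℝ) (hxk : (Q * A) *ᵥ xk = Q *ᵥ b)
    -- `xk1` is the minimizer of `‖x - xk‖_B` subject to `SAx = Sb`, `QAx = Qb`
    (hxk1S : (S * A) *ᵥ xk1 = S *ᵥ b)
    (hxk1Q : (Q * A) *ᵥ xk1 = Q *ᵥ b)
    (hxk1min : ∀ y : Fin n → ℝ, (S * A) *ᵥ y = S *ᵥ b → (Q * A) *ᵥ y = Q *ᵥ b →
      (xk1 - xk) ⬝ᵥ (B *ᵥ (xk1 - xk)) ≤ (y - xk) ⬝ᵥ (B *ᵥ (y - xk))) :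
    xk1 = xk - (Bih * P * Bih * Aᵀ * Sᵀ * N2 * S) *ᵥ (A *ᵥ xk - b) := by
  have hBihH : Bih * hB.posSemidef.sqrt = 1 := hBih ▸ nonsing_inv_mul _ hB.isUnit_det_sqrt
  have hBihT : Bihᵀ = Bih := hBih ▸ hB.transpose_inv_sqrt
  have hnorm : ∀ v, (Bih *ᵥ v) ⬝ᵥ (B *ᵥ (Bih *ᵥ v)) = v ⬝ᵥ v :=
    hBih ▸ hB.inv_sqrt_mulVec_dotProduct_mulVec
  set u := hB.posSemidef.sqrt *ᵥ (xk1 - xk)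
  have hu : Bih *ᵥ u = xk1 - xk := by rw [mulVec_mulVec, hBihH, one_mulVec]
  have hKu : (Q * A * Bih) *ᵥ u = 0 := by
    rw [← mulVec_mulVec, hu, mulVec_sub, hxk1Q, hxk, sub_self]
  have hMu : (S * A * Bih) *ᵥ u = S *ᵥ (b - A *ᵥ xk) := by
    rw [← mulVec_mulVec, hu, mulVec_sub, hxk1S, mulVec_sub, mulVec_mulVec]
  have hmin : ∀ v, (Q * A * Bih) *ᵥ v = 0 → (S * A * Bih) *ᵥ v = S *ᵥ (b - A *ᵥ xk) →
      u ⬝ᵥ u ≤ v ⬝ᵥ v := by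
    intro v hKv hMv
    have hy := hxk1min (xk + Bih *ᵥ v)
      (by rw [mulVec_add, mulVec_mulVec, hMv, mulVec_sub, mulVec_mulVec]; abel)
      (by rw [mulVec_add, mulVec_mulVec, hKv, add_zero, hxk])
    rwa [add_sub_cancel_left, ← hu, hnorm, hnorm] at hy
  have hST : (S * A * Bih)ᵀ = Bih * Aᵀ * Sᵀ := by
    rw [transpose_mul, transpose_mul, hBihT, Matrix.mul_assoc]
  have hN2' : IsMoorePenrose ((S * A * Bih) * (1 - N1 * (Q * A * Bih)) * (S * A * Bih)ᵀ) N2 := by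
    rw [hST, ← hP]
    simpa only [Matrix.mul_assoc] using hN2
  have hsol := hN1.eq_of_forall_dotProduct_self_le hN2' hKu hMu hmin
  rw [← hP, hST] at hsol
  calc xk1 = xk + Bih *ᵥ u := by rw [hu]; abel
    _ = _ := by
      rw [hsol, mulVec_mulVec, mulVec_mulVec, ← neg_sub, mulVec_neg, ← sub_eq_add_neg]
      simp only [Matrix.mul_assoc]

/-- closed-form update of subspace-constrained sketch-and-project.
If `xk1` minimizes `‖x - xk‖_B` subject to `SAx = Sb` and `QAx = Qb`, then
`xk1 = xk − B^{−1/2} P B^{−1/2} Aᵀ Sᵀ (S A B^{−1/2} P B^{−1/2} Aᵀ Sᵀ)† S (A xk − b)`,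
where `P = I − (QAB^{−1/2})† QAB^{−1/2}`. -/
theorem stmt_0 {m n d l : ℕ}
    (A : Matrix (Fin m) (Fin n) ℝ) (b : Fin m → ℝ)
    (hconsistent : ∃ x, A *ᵥ x = b)
    (B : Matrix (Fin n) (Fin n) ℝ) (hB : B.PosDef)
    (Q : Matrix (Fin d) (Fin m) ℝ) (S : Matrix (Fin l) (Fin m) ℝ)
    -- `Bih` is `B^{-1/2}`, the inverse of the positive definite square root of `B`
    (Bih : Matrix (Fin n) (Fin n) ℝ) (hBih : Bih = (hB.posSemidef.sqrt)⁻¹)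
    -- `N1 = (Q A B^{-1/2})†` and `P = I - N1 (Q A B^{-1/2})`
    (N1 : Matrix (Fin n) (Fin d) ℝ) (hN1 : IsMoorePenrose (Q * A * Bih) N1)
    (P : Matrix (Fin n) (Fin n) ℝ) (hP : P = 1 - N1 * (Q * A * Bih))
    -- `N2 = (S A B^{-1/2} P B^{-1/2} Aᵀ Sᵀ)†`
    (N2 : Matrix (Fin l) (Fin l) ℝ)
    (hN2 : IsMoorePenrose (S * A * Bih * P * Bih * Aᵀ * Sᵀ) N2)
    -- the initial iterate satisfies `Q A x0 = Q b`
    (x0 : Fin n → ℝ) (hx0 : (Q * A) *ᵥ x0 = Q *ᵥ b)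
    -- the current iterate satisfies `Q A xk = Q b`
    (xk xk1 : Fin n → ℝ) (hxk : (Q * A) *ᵥ xk = Q *ᵥ b)
    -- `xk1` is the minimizer of `‖x - xk‖_B` subject to `SAx = Sb`, `QAx = Qb`
    (hxk1S : (S * A) *ᵥ xk1 = S *ᵥ b)
    (hxk1Q : (Q * A) *ᵥ xk1 = Q *ᵥ b)
    (hxk1min : ∀ y : Fin n → ℝ, (S * A) *ᵥ y = S *ᵥ b → (Q * A) *ᵥ y = Q *ᵥ b →
      (xk1 - xk) ⬝ᵥ (B *ᵥ (xk1 - xk)) ≤ (y - xk) ⬝ᵥ (B *ᵥ (y - xk))) :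
    xk1 = xk - (Bih * P * Bih * Aᵀ * Sᵀ * N2 * S) *ᵥ (A *ᵥ xk - b) :=
  stmt_0_general A b B hB Q S Bih hBih N1 hN1 P hP N2 hN2 xk xk1 hxk hxk1S hxk1Q hxk1min
end

section
/- Let A ∈ ℝ^{m×n}, b ∈ ℝ^m with Ax = b consistent, B ∈ ℝ^{n×n} symmetric positive definite, Q ∈ ℝ^{d×m}, P := I − (Q A B^{−1/2})† Q A B^{−1/2}, and let x^0 satisfy QAx^0 = Qb with x* the minimizer of ||x − x^0||_B over {x : Ax = b}. Let {x^k}_{k≥0} be the iterates where x^{k+1} minimizes ||x − x^k||_B subject to S^k A x = S^k b and QAx = Qb, for arbitrary sketching matrices S^k ∈ ℝ^{ℓ×m}. Then for all k ≥ 0, the vector B^{1/2}(x^k − x*) lies in range(P B^{−1/2} Aᵀ). -/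
open Matrix
open scoped MatrixOrder

/-!
Each iterate `x^{k+1}` is the `B`-orthogonal projection of `x^k` onto an affine set that is
invariant under translation by `ker A`, so `B (x^{k+1} - x^k) ⊥ ker A`, i.e. it lies in
`range Aᵀ`; the same holds for `B (x* - x^0)`. Summing, `B (x^k - x*) = Aᵀ u`, hence
`B^{1/2} (x^k - x*) = B^{-1/2} Aᵀ u`. Moreover `QA (x^k - x*) = 0`, so `B^{1/2} (x^k - x*)`
lies in `ker (Q A B^{-1/2})`, on which `P = I - N (Q A B^{-1/2})` acts as the identity.
-/

namespace Matrix

variable {m n d : Type*} [Fintype n]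

lemma mem_range_transpose_of_forall_dotProduct_eq_zero [Fintype m] [DecidableEq m]
    [DecidableEq n] {A : Matrix m n ℝ} {v : n → ℝ} (h : ∀ w, A *ᵥ w = 0 → v ⬝ᵥ w = 0) :
    v ∈ LinearMap.range Aᵀ.mulVecLin := by
  have hv : WithLp.toLp 2 v ∈ (toEuclideanLin A).kerᗮ := by
    intro w hw
    have := h w.ofLp (by simpa [toLpLin_apply] using hw)
    simpa [EuclideanSpace.inner_eq_star_dotProduct, dotProduct_comm] using this
  rw [LinearMap.orthogonal_ker, ← toEuclideanLin_conjTranspose_eq_adjoint] at hv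
  obtain ⟨u, hu⟩ := hv
  exact ⟨u.ofLp, congrArg WithLp.ofLp hu⟩

lemma IsSymm.add_smul_dotProduct_mulVec_add_smul {B : Matrix n n ℝ} (hB : B.IsSymm)
    (w h : n → ℝ) (t : ℝ) :
    (w + t • h) ⬝ᵥ (B *ᵥ (w + t • h)) =
      w ⬝ᵥ (B *ᵥ w) + 2 * t * (h ⬝ᵥ (B *ᵥ w)) + t ^ 2 * (h ⬝ᵥ (B *ᵥ h)) := by
  have hswap : w ⬝ᵥ (B *ᵥ h) = h ⬝ᵥ (B *ᵥ w) := by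
    rw [dotProduct_mulVec, dotProduct_comm, ← mulVec_transpose, hB.eq]
  simp only [mulVec_add, mulVec_smul, dotProduct_add, add_dotProduct, dotProduct_smul,
    smul_dotProduct, smul_eq_mul, hswap]
  ring

lemma IsSymm.dotProduct_mulVec_eq_zero_of_forall_le {B : Matrix n n ℝ} (hB : B.IsSymm)
    {w h : n → ℝ} (hmin : ∀ t : ℝ, w ⬝ᵥ (B *ᵥ w) ≤ (w + t • h) ⬝ᵥ (B *ᵥ (w + t • h))) :
    h ⬝ᵥ (B *ᵥ w) = 0 := by
  have hdiscrim := discrim_le_zero (a := h ⬝ᵥ (B *ᵥ h)) (b := 2 * (h ⬝ᵥ (B *ᵥ w))) (c := 0)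
    fun t => by nlinarith [hmin t, hB.add_smul_dotProduct_mulVec_add_smul w h t]
  rw [discrim] at hdiscrim
  nlinarith [sq_nonneg (h ⬝ᵥ (B *ᵥ w))]

lemma IsSymm.mulVec_sub_mem_range_transpose_of_isMinOn [Fintype m] [DecidableEq m]
    [DecidableEq n] {A : Matrix m n ℝ} {B : Matrix n n ℝ} (hB : B.IsSymm) {S : Set (n → ℝ)}
    {z y : n → ℝ}
    (hS : ∀ h, A *ᵥ h = 0 → ∀ t : ℝ, y + t • h ∈ S)
    (hy : IsMinOn (fun x => (x - z) ⬝ᵥ (B *ᵥ (x - z))) S y) :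
    B *ᵥ (y - z) ∈ LinearMap.range Aᵀ.mulVecLin := by
  refine mem_range_transpose_of_forall_dotProduct_eq_zero fun h hh => ?_
  rw [dotProduct_comm]
  refine hB.dotProduct_mulVec_eq_zero_of_forall_le fun t => ?_
  simpa only [add_sub_right_comm] using isMinOn_iff.1 hy _ (hS h hh t)

lemma mulVec_add_smul_of_mulVec_eq_zero {A : Matrix m n ℝ} {h : n → ℝ} (hh : A *ᵥ h = 0)
    (y : n → ℝ) (t : ℝ) : A *ᵥ (y + t • h) = A *ᵥ y := by
  rw [mulVec_add, mulVec_smul, hh, smul_zero, add_zero]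

lemma mul_mulVec_add_smul_of_mulVec_eq_zero [Fintype m] {A : Matrix m n ℝ} {h : n → ℝ}
    (hh : A *ᵥ h = 0) (C : Matrix d m ℝ) (y : n → ℝ) (t : ℝ) :
    (C * A) *ᵥ (y + t • h) = (C * A) *ᵥ y := by
  rw [← mulVec_mulVec, mulVec_add_smul_of_mulVec_eq_zero hh, mulVec_mulVec]

lemma one_sub_mul_mulVec_of_mulVec_eq_zero [Fintype d] [DecidableEq n] (N : Matrix n d ℝ)
    {M : Matrix d n ℝ} {z : n → ℝ} (hz : M *ᵥ z = 0) : (1 - N * M) *ᵥ z = z := by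
  rw [sub_mulVec, one_mulVec, ← mulVec_mulVec, hz, mulVec_zero, sub_zero]

lemma PosDef.inv_sqrt_mul_sqrt [DecidableEq n] {B : Matrix n n ℝ} (hB : B.PosDef) :
    (CFC.sqrt B)⁻¹ * CFC.sqrt B = 1 :=
  nonsing_inv_mul _ <| (isUnit_iff_isUnit_det _).1 <|
    CFC.isUnit_sqrt_iff_isStrictlyPositive.2 hB.isStrictlyPositive

lemma one_sub_mul_mul_transpose_mulVec_eq [Fintype m] [Fintype d] [DecidableEq n]
    {A : Matrix m n ℝ} {B Bh Bih : Matrix n n ℝ} (N : Matrix n d ℝ) {C : Matrix d n ℝ}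
    (hsq : Bh * Bh = B) (hinv : Bih * Bh = 1) {v : n → ℝ} {u : m → ℝ} (hC : C *ᵥ v = 0)
    (hu : B *ᵥ v = Aᵀ *ᵥ u) :
    ((1 - N * (C * Bih)) * Bih * Aᵀ) *ᵥ u = Bh *ᵥ v := by
  have hBh : Bih *ᵥ (Aᵀ *ᵥ u) = Bh *ᵥ v := by
    rw [← hu, ← hsq, ← mulVec_mulVec, mulVec_mulVec (M := Bih), hinv, one_mulVec]
  rw [← mulVec_mulVec, ← mulVec_mulVec, hBh, one_sub_mul_mulVec_of_mulVec_eq_zero]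
  rw [mulVec_mulVec, Matrix.mul_assoc, hinv, Matrix.mul_one, hC]

end Matrix

theorem stmt_2_general {m n d l : ℕ}
    (A : Matrix (Fin m) (Fin n) ℝ) (b : Fin m → ℝ)
    (B : Matrix (Fin n) (Fin n) ℝ) (hB : B.PosDef)
    (Q : Matrix (Fin d) (Fin m) ℝ)
    -- `Bh = B^{1/2}` and `Bih = B^{-1/2}`
    (Bh : Matrix (Fin n) (Fin n) ℝ) (hBh : Bh = CFC.sqrt B)
    (Bih : Matrix (Fin n) (Fin n) ℝ) (hBih : Bih = (CFC.sqrt B)⁻¹)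
    -- `N1 = (Q A B^{-1/2})†` and `P = I - N1 (Q A B^{-1/2})`
    (N1 : Matrix (Fin n) (Fin d) ℝ)
    (P : Matrix (Fin n) (Fin n) ℝ) (hP : P = 1 - N1 * (Q * A * Bih))
    -- the arbitrary sketching matrices, one for each iteration
    (Sseq : ℕ → Matrix (Fin l) (Fin m) ℝ)
    -- the iterates: `x 0` satisfies the subspace constraint, and `x (k+1)` is the
    -- minimizer of `‖x - x k‖_B` subject to `S^k A x = S^k b` and `QAx = Qb`
    (x : ℕ → (Fin n → ℝ))
    (hx0 : (Q * A) *ᵥ x 0 = Q *ᵥ b)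
    (hstep : ∀ k : ℕ,
      (Sseq k * A) *ᵥ x (k + 1) = Sseq k *ᵥ b ∧
      (Q * A) *ᵥ x (k + 1) = Q *ᵥ b ∧
      ∀ y : Fin n → ℝ, (Sseq k * A) *ᵥ y = Sseq k *ᵥ b → (Q * A) *ᵥ y = Q *ᵥ b →
        (x (k + 1) - x k) ⬝ᵥ (B *ᵥ (x (k + 1) - x k)) ≤ (y - x k) ⬝ᵥ (B *ᵥ (y - x k)))
    -- `x*` is the minimizer of `‖x - x 0‖_B` over `{x : Ax = b}`
    (xstar : Fin n → ℝ) (hxstar_sol : A *ᵥ xstar = b)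
    (hxstar_min : ∀ y : Fin n → ℝ, A *ᵥ y = b →
      (xstar - x 0) ⬝ᵥ (B *ᵥ (xstar - x 0)) ≤ (y - x 0) ⬝ᵥ (B *ᵥ (y - x 0))) :
    ∀ k : ℕ, ∃ u : Fin m → ℝ, Bh *ᵥ (x k - xstar) = (P * Bih * Aᵀ) *ᵥ u := by
  have hBsymm : B.IsSymm := hB.isHermitian
  have hrange : ∀ k, B *ᵥ (x k - xstar) ∈ LinearMap.range Aᵀ.mulVecLin := by
    intro k
    induction k with
    | zero =>
      rw [← neg_sub, mulVec_neg]
      exact neg_mem <| hBsymm.mulVec_sub_mem_range_transpose_of_isMinOn (S := {y | A *ᵥ y = b})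
        (fun h hh t => (mulVec_add_smul_of_mulVec_eq_zero hh _ t).trans hxstar_sol)
        (isMinOn_iff.2 hxstar_min)
    | succ k ih =>
      obtain ⟨hSk, hQk, hmin⟩ := hstep k
      rw [← sub_add_sub_cancel (x (k + 1)) (x k) xstar, mulVec_add]
      refine add_mem (hBsymm.mulVec_sub_mem_range_transpose_of_isMinOn
        (S := {y | (Sseq k * A) *ᵥ y = Sseq k *ᵥ b ∧ (Q * A) *ᵥ y = Q *ᵥ b})
        (fun h hh t => ⟨(mul_mulVec_add_smul_of_mulVec_eq_zero hh _ _ t).trans hSk,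
          (mul_mulVec_add_smul_of_mulVec_eq_zero hh _ _ t).trans hQk⟩)
        (isMinOn_iff.2 fun y hy => hmin y hy.1 hy.2)) ih
  have hker : ∀ k, (Q * A) *ᵥ (x k - xstar) = 0 := by
    intro k
    rw [mulVec_sub, ← mulVec_mulVec xstar Q A, hxstar_sol, sub_eq_zero]
    cases k with
    | zero => exact hx0
    | succ k => exact (hstep k).2.1
  have hBh_sq : Bh * Bh = B := hBh ▸ CFC.sqrt_mul_sqrt_self B hB.posSemidef.nonneg
  have hBih_Bh : Bih * Bh = 1 := hBih ▸ hBh ▸ hB.inv_sqrt_mul_sqrt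
  intro k
  obtain ⟨u, hu⟩ := hrange k
  exact ⟨u, hP ▸
    (one_sub_mul_mul_transpose_mulVec_eq (A := A) N1 hBh_sq hBih_Bh (hker k) hu.symm).symm⟩

/-- invariant subspace property. For the subspace-constrained
sketch-and-project iterates `{x^k}` (with arbitrary sketching matrices `S^k`), the
vector `B^{1/2}(x^k − x*)` lies in `range(P B^{−1/2} Aᵀ)` for all `k ≥ 0`. -/
theorem stmt_2 {m n d l : ℕ}
    (A : Matrix (Fin m) (Fin n) ℝ) (b : Fin m → ℝ)
    (hconsistent : ∃ x, A *ᵥ x = b)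
    (B : Matrix (Fin n) (Fin n) ℝ) (hB : B.PosDef)
    (Q : Matrix (Fin d) (Fin m) ℝ)
    -- `Bh = B^{1/2}` and `Bih = B^{-1/2}`
    (Bh : Matrix (Fin n) (Fin n) ℝ) (hBh : Bh = CFC.sqrt B)
    (Bih : Matrix (Fin n) (Fin n) ℝ) (hBih : Bih = (CFC.sqrt B)⁻¹)
    -- `N1 = (Q A B^{-1/2})†` and `P = I - N1 (Q A B^{-1/2})`
    (N1 : Matrix (Fin n) (Fin d) ℝ) (hN1 : IsMoorePenrose (Q * A * Bih) N1)
    (P : Matrix (Fin n) (Fin n) ℝ) (hP : P = 1 - N1 * (Q * A * Bih))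
    -- the arbitrary sketching matrices, one for each iteration
    (Sseq : ℕ → Matrix (Fin l) (Fin m) ℝ)
    -- the iterates: `x 0` satisfies the subspace constraint, and `x (k+1)` is the
    -- minimizer of `‖x - x k‖_B` subject to `S^k A x = S^k b` and `QAx = Qb`
    (x : ℕ → (Fin n → ℝ))
    (hx0 : (Q * A) *ᵥ x 0 = Q *ᵥ b)
    (hstep : ∀ k : ℕ,
      (Sseq k * A) *ᵥ x (k + 1) = Sseq k *ᵥ b ∧
      (Q * A) *ᵥ x (k + 1) = Q *ᵥ b ∧
      ∀ y : Fin n → ℝ, (Sseq k * A) *ᵥ y = Sseq k *ᵥ b → (Q * A) *ᵥ y = Q *ᵥ b →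
        (x (k + 1) - x k) ⬝ᵥ (B *ᵥ (x (k + 1) - x k)) ≤ (y - x k) ⬝ᵥ (B *ᵥ (y - x k)))
    -- `x*` is the minimizer of `‖x - x 0‖_B` over `{x : Ax = b}`
    (xstar : Fin n → ℝ) (hxstar_sol : A *ᵥ xstar = b)
    (hxstar_min : ∀ y : Fin n → ℝ, A *ᵥ y = b →
      (xstar - x 0) ⬝ᵥ (B *ᵥ (xstar - x 0)) ≤ (y - x 0) ⬝ᵥ (B *ᵥ (y - x 0))) :
    ∀ k : ℕ, ∃ u : Fin m → ℝ, Bh *ᵥ (x k - xstar) = (P * Bih * Aᵀ) *ᵥ u :=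
  stmt_2_general A b B hB Q Bh hBh Bih hBih N1 P hP Sseq x hx0 hstep xstar hxstar_sol hxstar_min
end

section
/- Let M, N ∈ ℝ^{ℓ×ℓ} be symmetric positive semidefinite matrices with M ⪯ N (i.e., N − M positive semidefinite) and null(N) ⊆ null(M). Then for every ξ ∈ range(M), ξᵀ M† ξ ≥ ξᵀ N† ξ, where † denotes the Moore–Penrose pseudoinverse. -/
open Matrix

/-!
Put `ξ = M u`, `w = M† ξ` and `x = (N†)ᵀ ξ`. Then `M w = ξ`, and the kernel inclusion makes
`N x = ξ` as well. Expanding `0 ≤ (x - w)ᵀ M (x - w)` and bounding `xᵀ M x ≤ xᵀ N x = xᵀ ξ`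
gives `xᵀ ξ ≤ wᵀ ξ`, which is the claim.
-/

lemma mul_mul_eq_self_of_ker_le {m n k : Type*} [Fintype n] [Fintype k]
    {M : Matrix m n ℝ} {N : Matrix k n ℝ} {G : Matrix n k ℝ}
    (hG : N * G * N = N) (hker : ∀ x, N *ᵥ x = 0 → M *ᵥ x = 0) :
    M * G * N = M := by
  classical
  ext i j
  have hnull : N *ᵥ (Pi.single j 1 - (G * N) *ᵥ Pi.single j 1) = 0 := by
    rw [mulVec_sub, mulVec_mulVec, ← Matrix.mul_assoc, hG, sub_self]
  have hcol := hker _ hnull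
  rw [mulVec_sub, mulVec_mulVec, sub_eq_zero, ← Matrix.mul_assoc] at hcol
  simpa [mulVec_single] using congrFun hcol.symm i

lemma dotProduct_le_of_posSemidef_sub {n : Type*} [Fintype n] {M N : Matrix n n ℝ}
    (hM : M.PosSemidef) (hMN : (N - M).PosSemidef) {ξ w x : n → ℝ}
    (hw : M *ᵥ w = ξ) (hx : N *ᵥ x = ξ) :
    x ⬝ᵥ ξ ≤ w ⬝ᵥ ξ := by
  have hMsymm : Mᵀ = M := (isHermitian_iff_isSymm.mp hM.1).eq
  have hwM : ∀ z, w ⬝ᵥ (M *ᵥ z) = ξ ⬝ᵥ z := fun z => by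
    rw [dotProduct_mulVec, ← mulVec_transpose, hMsymm, hw]
  have hxMx : x ⬝ᵥ (M *ᵥ x) ≤ x ⬝ᵥ ξ := by
    have := hMN.dotProduct_mulVec_nonneg x
    rw [star_trivial, sub_mulVec, dotProduct_sub, hx] at this
    linarith
  have hsq : 0 ≤ (x - w) ⬝ᵥ (M *ᵥ (x - w)) := by
    simpa using hM.dotProduct_mulVec_nonneg (x - w)
  rw [mulVec_sub, sub_dotProduct, dotProduct_sub, dotProduct_sub, hwM, hwM, hw] at hsq
  linarith [dotProduct_comm ξ x, dotProduct_comm ξ w]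

theorem stmt_5_general {l : ℕ}
    (M N : Matrix (Fin l) (Fin l) ℝ)
    (hM : M.PosSemidef)
    (hMN : (N - M).PosSemidef)
    (hker : ∀ x : Fin l → ℝ, N *ᵥ x = 0 → M *ᵥ x = 0)
    (Mp Np : Matrix (Fin l) (Fin l) ℝ)
    (hMp : IsMoorePenrose M Mp) (hNp : IsMoorePenrose N Np) :
    ∀ ξ : Fin l → ℝ, (∃ u : Fin l → ℝ, ξ = M *ᵥ u) →
      ξ ⬝ᵥ (Np *ᵥ ξ) ≤ ξ ⬝ᵥ (Mp *ᵥ ξ) := by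
  rintro ξ ⟨u, rfl⟩
  have hMsymm : Mᵀ = M := (isHermitian_iff_isSymm.mp hM.1).eq
  have hNsymm : Nᵀ = N := by
    simpa using (isHermitian_iff_isSymm.mp (hMN.1.add hM.1)).eq
  have hrange : N * Npᵀ * M = M := by
    simpa [Matrix.transpose_mul, hMsymm, hNsymm, Matrix.mul_assoc] using
      congrArg transpose (mul_mul_eq_self_of_ker_le hNp.1 hker)
  calc (M *ᵥ u) ⬝ᵥ (Np *ᵥ (M *ᵥ u)) = (Npᵀ *ᵥ (M *ᵥ u)) ⬝ᵥ (M *ᵥ u) := by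
        rw [dotProduct_mulVec, mulVec_transpose]
    _ ≤ (Mp *ᵥ (M *ᵥ u)) ⬝ᵥ (M *ᵥ u) :=
        dotProduct_le_of_posSemidef_sub hM hMN
          (by simp only [mulVec_mulVec, ← Matrix.mul_assoc, hMp.1])
          (by simp only [mulVec_mulVec, ← Matrix.mul_assoc, hrange])
    _ = (M *ᵥ u) ⬝ᵥ (Mp *ᵥ (M *ᵥ u)) := dotProduct_comm _ _

/-- pseudoinverse monotonicity. If `M ⪯ N` are psd with
`null(N) ⊆ null(M)`, then `ξᵀ M† ξ ≥ ξᵀ N† ξ` for every `ξ ∈ range(M)`. -/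
theorem stmt_5 {l : ℕ}
    (M N : Matrix (Fin l) (Fin l) ℝ)
    (hM : M.PosSemidef) (hN : N.PosSemidef)
    (hMN : (N - M).PosSemidef)
    (hker : ∀ x : Fin l → ℝ, N *ᵥ x = 0 → M *ᵥ x = 0)
    (Mp Np : Matrix (Fin l) (Fin l) ℝ)
    (hMp : IsMoorePenrose M Mp) (hNp : IsMoorePenrose N Np) :
    ∀ ξ : Fin l → ℝ, (∃ u : Fin l → ℝ, ξ = M *ᵥ u) →
      ξ ⬝ᵥ (Np *ᵥ ξ) ≤ ξ ⬝ᵥ (Mp *ᵥ ξ) :=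
  stmt_5_general M N hM hMN hker Mp Np hMp hNp
end

section
/- Let A ∈ ℝ^{m×n}, b ∈ ℝ^m with Ax = b consistent, B ∈ ℝ^{n×n} symmetric positive definite, Q ∈ ℝ^{d×m}, P := I − (Q A B^{−1/2})† Q A B^{−1/2}, and x* the minimizer of ||x − x^0||_B over {x : Ax = b}, where x^0 satisfies QAx^0 = Qb. Let S_ℓ ∈ ℝ^{ℓ×m} be a random matrix whose ℓ rows s_1, …, s_ℓ ∈ ℝ^m are i.i.d. draws from a finitely supported distribution, and let Z₁ := (s₁ᵀ A B^{−1/2} P)† s₁ᵀ A B^{−1/2} P be the orthogonal projector onto range(P B^{−1/2} Aᵀ s₁). Assume null(E[Z₁]) = null(A B^{−1/2} P). Then the subspace-constrained sketch-and-project iterates {x^k} with sketching matrix S_ℓ (a fresh independent draw each iteration) satisfy E||x^k − x*||_B² ≤ (1 − λmin⁺(E[Z₁]))^{ℓk} · ||x^0 − x*||_B². -/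
/-!
Write `u = B^{1/2} (x - x*)`, so that `‖x - x*‖_B = ‖u‖`, and let `K` be the subspace of those `z`
for which `B^{-1/2} z` solves the homogeneous constraints `S A d = 0`, `Q A d = 0` of a block
step. The step maps `u` to some `u' ∈ K` with `u - u' ⊥ K`, whereas applying the `ℓ` rank-one
maps `I - Z_{s_t}` to `u` one after another changes `u` only by vectors orthogonal to `K`. The
result `v` therefore has `v - u' ⊥ u'`, so `‖u'‖ ≤ ‖v‖`: a block step contracts at least as much
as `ℓ` single-row steps. For a single row, `E ‖(I - Z) v‖² = ‖v‖² - vᵀ E[Z] v`, which is at most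
`(1 - λmin⁺(E[Z])) ‖v‖²` when `v ⊥ null(E[Z])`. Every iterate keeps `x - x*` `B`-orthogonal to
`null(A)`, which by the exactness assumption puts `u` in `null(E[Z])^⊥`, a subspace invariant
under each `I - Z`. Iterating over the `ℓ` rows and the `k` blocks gives `(1 - λmin⁺)^{ℓk}`.
-/

open Matrix

/-- The smallest nonzero eigenvalue of a square real matrix
(with junk value `sInf ∅ = 0` if every eigenvalue is zero). -/
noncomputable def lamMinPos {n : ℕ} (M : Matrix (Fin n) (Fin n) ℝ) : ℝ :=
  sInf {μ : ℝ | μ ≠ 0 ∧ ∃ v : Fin n → ℝ, v ≠ 0 ∧ M *ᵥ v = μ • v}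

/-- The trajectory of an iterative method: `traj step x0 k ω` is the `k`-th iterate
obtained from `x0` using the random draws `ω 0, …, ω (k-1)`. -/
def traj {V I : Type*} (step : I → V → V) (x0 : V) : (k : ℕ) → (Fin k → I) → V
  | 0, _ => x0
  | k + 1, ω => step (ω (Fin.last k)) (traj step x0 k (Fin.init ω))

section Trajectory

variable {V I : Type*}

theorem traj_snoc (step : I → V → V) (x0 : V) (k : ℕ) (ω : Fin k → I) (c : I) :
    traj step x0 (k + 1) (Fin.snoc ω c) = step c (traj step x0 k ω) := by
  simp [traj]

theorem traj_mem {S : Set V} {step : I → V → V} (hS : ∀ c, Set.MapsTo (step c) S S) {x0 : V}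
    (hx0 : x0 ∈ S) : ∀ k ω, traj step x0 k ω ∈ S
  | 0, _ => hx0
  | k + 1, ω => hS _ (traj_mem hS hx0 k (Fin.init ω))

theorem sum_pi_fin_succ {β : Type*} [Fintype β] {k : ℕ} (f : (Fin (k + 1) → β) → ℝ) :
    ∑ ω, f ω = ∑ ω : Fin k → β, ∑ c, f (Fin.snoc ω c) := by
  rw [← (Fin.snocEquiv fun _ => β).sum_comp, Fintype.sum_prod_type, Finset.sum_comm]
  rfl

theorem sum_prod_mul_traj_le [Fintype I] {step : I → V → V} {p : I → ℝ} (hp : ∀ c, 0 ≤ p c)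
    {F : V → ℝ} {ρ : ℝ} (hρ : 0 ≤ ρ) {S : Set V} (hS : ∀ c, Set.MapsTo (step c) S S)
    (hF : ∀ x ∈ S, ∑ c, p c * F (step c x) ≤ ρ * F x) {x0 : V} (hx0 : x0 ∈ S) (k : ℕ) :
    ∑ ω : Fin k → I, (∏ i, p (ω i)) * F (traj step x0 k ω) ≤ ρ ^ k * F x0 := by
  induction k with
  | zero => simp [traj]
  | succ k ih =>
    calc ∑ ω : Fin (k + 1) → I, (∏ i, p (ω i)) * F (traj step x0 (k + 1) ω)
        = ∑ ω : Fin k → I, (∏ i, p (ω i)) * ∑ c, p c * F (step c (traj step x0 k ω)) := by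
          simp only [sum_pi_fin_succ, Fin.prod_univ_castSucc, Fin.snoc_castSucc, Fin.snoc_last,
            traj_snoc, Finset.mul_sum, mul_assoc]
      _ ≤ ∑ ω : Fin k → I, (∏ i, p (ω i)) * (ρ * F (traj step x0 k ω)) := by
          gcongr with ω
          · exact Finset.prod_nonneg fun i _ => hp _
          · exact hF _ (traj_mem hS hx0 k ω)
      _ = ρ * ∑ ω : Fin k → I, (∏ i, p (ω i)) * F (traj step x0 k ω) := by
          rw [Finset.mul_sum]; exact Finset.sum_congr rfl fun _ _ => by ring
      _ ≤ ρ ^ (k + 1) * F x0 := by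
          rw [pow_succ', mul_assoc]; exact mul_le_mul_of_nonneg_left ih hρ

end Trajectory

namespace Matrix

variable {n : Type*} [Fintype n]

theorem IsSymm.dotProduct_mulVec_comm {M : Matrix n n ℝ} (hM : M.IsSymm) (v w : n → ℝ) :
    v ⬝ᵥ (M *ᵥ w) = (M *ᵥ v) ⬝ᵥ w := by
  rw [dotProduct_mulVec, ← mulVec_transpose, hM.eq]

theorem PosSemidef.dotProduct_mulVec_sub_eq_zero_of_forall_le {M : Matrix n n ℝ}
    (hM : M.PosSemidef) {F : Set (n → ℝ)} {x x' d : n → ℝ}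
    (hmin : ∀ y ∈ F, (x' - x) ⬝ᵥ (M *ᵥ (x' - x)) ≤ (y - x) ⬝ᵥ (M *ᵥ (y - x)))
    (hd : ∀ t : ℝ, x' + t • d ∈ F) : d ⬝ᵥ (M *ᵥ (x' - x)) = 0 := by
  have hsymm := isHermitian_iff_isSymm.1 hM.1
  have hexpand : ∀ t : ℝ, (x' + t • d - x) ⬝ᵥ (M *ᵥ (x' + t • d - x)) =
      (x' - x) ⬝ᵥ (M *ᵥ (x' - x)) + 2 * t * (d ⬝ᵥ (M *ᵥ (x' - x))) + t ^ 2 * (d ⬝ᵥ (M *ᵥ d)) := by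
    intro t
    rw [add_sub_right_comm]
    simp only [mulVec_add, mulVec_smul, dotProduct_add, add_dotProduct, dotProduct_smul,
      smul_dotProduct, smul_eq_mul, hsymm.dotProduct_mulVec_comm (x' - x) d,
      dotProduct_comm (M *ᵥ (x' - x)) d]
    ring
  have hγ : 0 ≤ d ⬝ᵥ (M *ᵥ d) := by simpa using hM.dotProduct_mulVec_nonneg d
  -- `2 t β + t² γ ≥ 0` for all `t`, with `γ ≥ 0`, forces `β = 0`: take `t = -β / (γ + 1)`
  set β := d ⬝ᵥ (M *ᵥ (x' - x))
  set γ := d ⬝ᵥ (M *ᵥ d)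
  have key := hmin _ (hd (-β / (γ + 1)))
  rw [hexpand] at key
  field_simp at key
  nlinarith [sq_nonneg β]

theorem IsSymm.mulVec_dotProduct_mulVec_eq {B C : Matrix n n ℝ} (hCs : C.IsSymm) (hCC : C * C = B)
    (y h : n → ℝ) : (C *ᵥ y) ⬝ᵥ (C *ᵥ h) = h ⬝ᵥ (B *ᵥ y) := by
  rw [← hCC, ← mulVec_mulVec, hCs.dotProduct_mulVec_comm h, dotProduct_comm]

theorem dotProduct_self_le_of_dotProduct_sub_eq_zero {u v : n → ℝ} (h : (v - u) ⬝ᵥ u = 0) :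
    u ⬝ᵥ u ≤ v ⬝ᵥ v := by
  have hv : v = u + (v - u) := (add_sub_cancel u v).symm
  rw [hv, add_dotProduct, dotProduct_add, dotProduct_add, dotProduct_comm u (v - u), h]
  simpa using dotProduct_self_star_nonneg (v - u)

theorem dotProduct_self_pos {v : n → ℝ} (hv : v ≠ 0) : 0 < v ⬝ᵥ v :=
  lt_of_le_of_ne (by simpa using dotProduct_self_star_nonneg v)
    (Ne.symm (dotProduct_self_eq_zero.not.2 hv))

variable [DecidableEq n] {B : Matrix n n ℝ}

theorem IsHermitian.sum_dotProduct_eigenvectorBasis_mul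
    {M : Matrix n n ℝ} (hM : M.IsHermitian) (x y : n → ℝ) :
    ∑ i, (x ⬝ᵥ ⇑(hM.eigenvectorBasis i)) * (⇑(hM.eigenvectorBasis i) ⬝ᵥ y) = x ⬝ᵥ y := by
  have h := hM.eigenvectorBasis.sum_inner_mul_inner (WithLp.toLp 2 x) (WithLp.toLp 2 y)
  simp only [EuclideanSpace.inner_eq_star_dotProduct, star_trivial] at h
  simpa [dotProduct_comm, mul_comm] using h

theorem IsHermitian.eigenvectorUnitary_mul_diagonal_sqrt_mul_star (hB : B.IsHermitian) :
    (hB.eigenvectorUnitary : Matrix n n ℝ) * diagonal (fun i => Real.sqrt (hB.eigenvalues i)) *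
      star (hB.eigenvectorUnitary : Matrix n n ℝ) = cfc Real.sqrt B := by
  rw [hB.cfc_eq, IsHermitian.cfc, Unitary.conjStarAlgAut_apply]
  rfl

theorem isSymm_cfc (f : ℝ → ℝ) (B : Matrix n n ℝ) : (cfc f B).IsSymm :=
  isHermitian_iff_isSymm.1 (cfc_predicate f B)

theorem PosSemidef.cfc_sqrt_mul_self (hB : B.PosSemidef) :
    cfc Real.sqrt B * cfc Real.sqrt B = B := by
  rw [← cfc_mul Real.sqrt Real.sqrt B]
  conv_rhs => rw [← cfc_id ℝ B hB.1.isSelfAdjoint]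
  refine cfc_congr fun x hx => ?_
  rw [hB.1.spectrum_real_eq_range_eigenvalues] at hx
  obtain ⟨i, rfl⟩ := hx
  exact Real.mul_self_sqrt (hB.eigenvalues_nonneg i)

theorem PosDef.isUnit_det_cfc_sqrt (hB : B.PosDef) : IsUnit (cfc Real.sqrt B).det := by
  refine isUnit_iff_ne_zero.2 fun h => hB.det_pos.ne' ?_
  rw [← hB.posSemidef.cfc_sqrt_mul_self, det_mul, h, zero_mul]

theorem PosDef.exists_isSymm_mul_self_eq_and_mul_inv_eq_one (hB : B.PosDef) :
    ∃ C : Matrix n n ℝ, C.IsSymm ∧ C * C = B ∧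
      C * ((hB.posSemidef.1.eigenvectorUnitary : Matrix n n ℝ) *
        diagonal (fun i => Real.sqrt (hB.posSemidef.1.eigenvalues i)) *
        star (hB.posSemidef.1.eigenvectorUnitary : Matrix n n ℝ))⁻¹ = 1 := by
  refine ⟨cfc Real.sqrt B, isSymm_cfc _ _, hB.posSemidef.cfc_sqrt_mul_self, ?_⟩
  rw [hB.posSemidef.1.eigenvectorUnitary_mul_diagonal_sqrt_mul_star]
  exact mul_nonsing_inv _ hB.isUnit_det_cfc_sqrt

end Matrix

section LamMinPos

variable {n : ℕ} {M : Matrix (Fin n) (Fin n) ℝ}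

theorem lamMinPos_le {μ : ℝ} (hM : M.PosSemidef) (hμ : μ ≠ 0) {v : Fin n → ℝ} (hv : v ≠ 0)
    (hMv : M *ᵥ v = μ • v) : lamMinPos M ≤ μ := by
  refine csInf_le ⟨0, ?_⟩ ⟨hμ, v, hv, hMv⟩
  rintro ν ⟨-, z, hz, hMz⟩
  have h := hM.dotProduct_mulVec_nonneg z
  rw [star_trivial, hMz, dotProduct_smul, smul_eq_mul] at h
  exact nonneg_of_mul_nonneg_left h (dotProduct_self_pos hz)

theorem lamMinPos_le_one (hM : M.PosSemidef) (hM1 : ∀ v, v ⬝ᵥ (M *ᵥ v) ≤ v ⬝ᵥ v) :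
    lamMinPos M ≤ 1 := by
  by_cases h : ∃ μ : ℝ, μ ≠ 0 ∧ ∃ v : Fin n → ℝ, v ≠ 0 ∧ M *ᵥ v = μ • v
  · obtain ⟨μ, hμ, v, hv, hMv⟩ := h
    refine (lamMinPos_le hM hμ hv hMv).trans ?_
    have h1 := hM1 v
    rw [hMv, dotProduct_smul, smul_eq_mul] at h1
    exact (mul_le_iff_le_one_left (dotProduct_self_pos hv)).1 h1
  · have hempty : {μ : ℝ | μ ≠ 0 ∧ ∃ v : Fin n → ℝ, v ≠ 0 ∧ M *ᵥ v = μ • v} = ∅ :=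
      Set.eq_empty_iff_forall_notMem.2 fun μ hμ => h ⟨μ, hμ⟩
    rw [lamMinPos, hempty, Real.sInf_empty]
    exact zero_le_one

theorem lamMinPos_mul_dotProduct_le (hM : M.PosSemidef) {v : Fin n → ℝ}
    (hv : ∀ z, M *ᵥ z = 0 → v ⬝ᵥ z = 0) : lamMinPos M * (v ⬝ᵥ v) ≤ v ⬝ᵥ (M *ᵥ v) := by
  have hH := hM.1
  have hsymm : M.IsSymm := isHermitian_iff_isSymm.1 hH
  set e : Fin n → Fin n → ℝ := fun i => ⇑(hH.eigenvectorBasis i)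
  set a : Fin n → ℝ := fun i => v ⬝ᵥ e i
  have he : ∀ i, M *ᵥ e i = hH.eigenvalues i • e i := hH.mulVec_eigenvectorBasis
  have he0 : ∀ i, e i ≠ 0 := fun i => by
    simpa [e] using hH.eigenvectorBasis.orthonormal.ne_zero i
  have hquad : v ⬝ᵥ (M *ᵥ v) = ∑ i, hH.eigenvalues i * a i ^ 2 := by
    rw [← hH.sum_dotProduct_eigenvectorBasis_mul]
    refine Finset.sum_congr rfl fun i _ => ?_
    rw [hsymm.dotProduct_mulVec_comm, he, smul_dotProduct, smul_eq_mul, dotProduct_comm _ v]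
    ring
  have hnorm : v ⬝ᵥ v = ∑ i, a i ^ 2 := by
    rw [← hH.sum_dotProduct_eigenvectorBasis_mul]
    exact Finset.sum_congr rfl fun i _ => by rw [dotProduct_comm _ v]; ring
  rw [hquad, hnorm, Finset.mul_sum]
  refine Finset.sum_le_sum fun i _ => ?_
  by_cases hzero : hH.eigenvalues i = 0
  · have ha : a i = 0 := hv (e i) (by rw [he, hzero, zero_smul])
    simp [ha]
  · exact mul_le_mul_of_nonneg_right (lamMinPos_le hM hzero (he0 i) (he i)) (sq_nonneg _)

end LamMinPos

namespace IsMoorePenrose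

variable {k l : Type*} [Fintype k] [Fintype l] {M : Matrix k l ℝ} {Mp : Matrix l k ℝ}

theorem isSymm_mul (h : IsMoorePenrose M Mp) : (Mp * M).IsSymm := h.2.2.2

theorem isIdempotentElem_mul (h : IsMoorePenrose M Mp) : IsIdempotentElem (Mp * M) := by
  rw [IsIdempotentElem, Matrix.mul_assoc, ← Matrix.mul_assoc M, h.1]

end IsMoorePenrose

section Projection

variable {n : Type*} [Fintype n] {Z : Matrix n n ℝ}

theorem dotProduct_mulVec_eq_of_isProj (hs : Z.IsSymm) (hi : IsIdempotentElem Z) (v : n → ℝ) :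
    v ⬝ᵥ (Z *ᵥ v) = (Z *ᵥ v) ⬝ᵥ (Z *ᵥ v) := by
  rw [← hs.dotProduct_mulVec_comm, mulVec_mulVec, hi.eq]

theorem posSemidef_of_isProj (hs : Z.IsSymm) (hi : IsIdempotentElem Z) : Z.PosSemidef := by
  refine .of_dotProduct_mulVec_nonneg (isHermitian_iff_isSymm.2 hs) fun v => ?_
  rw [star_trivial, dotProduct_mulVec_eq_of_isProj hs hi]
  simpa using dotProduct_self_star_nonneg (Z *ᵥ v)

theorem sub_mulVec_dotProduct_self_of_isProj (hs : Z.IsSymm) (hi : IsIdempotentElem Z)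
    (v : n → ℝ) : (v - Z *ᵥ v) ⬝ᵥ (v - Z *ᵥ v) = v ⬝ᵥ v - v ⬝ᵥ (Z *ᵥ v) := by
  rw [sub_dotProduct, dotProduct_sub, dotProduct_sub, ← dotProduct_mulVec_eq_of_isProj hs hi,
    dotProduct_comm (Z *ᵥ v) v]
  ring

end Projection

section ProjStep

variable {ι : Type*} {n : Type*} [Fintype n]

def projStep (Z : ι → Matrix n n ℝ) (i : ι) (v : n → ℝ) : n → ℝ := v - Z i *ᵥ v

theorem traj_projStep_dotProduct {Z : ι → Matrix n n ℝ} (hs : ∀ i, (Z i).IsSymm) {z : n → ℝ}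
    (v : n → ℝ) : ∀ (k : ℕ) (c : Fin k → ι), (∀ t, Z (c t) *ᵥ z = 0) →
      traj (projStep Z) v k c ⬝ᵥ z = v ⬝ᵥ z
  | 0, _, _ => rfl
  | k + 1, c, hc => by
    rw [traj, projStep, sub_dotProduct, ← (hs _).dotProduct_mulVec_comm, hc, dotProduct_zero,
      sub_zero, traj_projStep_dotProduct hs v k (Fin.init c) fun t => hc _]

theorem sum_mul_projStep_dotProduct_self [Fintype ι] {Z : ι → Matrix n n ℝ} (hs : ∀ i, (Z i).IsSymm)
    (hi : ∀ i, IsIdempotentElem (Z i)) {w : ι → ℝ} (hw1 : ∑ i, w i = 1) (v : n → ℝ) :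
    ∑ i, w i * (projStep Z i v ⬝ᵥ projStep Z i v) = v ⬝ᵥ v - v ⬝ᵥ ((∑ i, w i • Z i) *ᵥ v) := by
  simp only [projStep, sub_mulVec_dotProduct_self_of_isProj (hs _) (hi _), Matrix.sum_mulVec,
    smul_mulVec, dotProduct_sum, dotProduct_smul, smul_eq_mul, mul_sub, Finset.sum_sub_distrib,
    ← Finset.sum_mul, hw1, one_mul]

theorem posSemidef_sum_smul_of_isProj [Fintype ι] {m : ℕ} {Z : ι → Matrix (Fin m) (Fin m) ℝ}
    (hs : ∀ i, (Z i).IsSymm) (hi : ∀ i, IsIdempotentElem (Z i)) {w : ι → ℝ}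
    (hw : ∀ i, 0 ≤ w i) : (∑ i, w i • Z i).PosSemidef :=
  posSemidef_sum _ fun i _ => (posSemidef_of_isProj (hs i) (hi i)).smul (hw i)

theorem lamMinPos_sum_smul_le_one [Fintype ι] {m : ℕ} {Z : ι → Matrix (Fin m) (Fin m) ℝ}
    (hs : ∀ i, (Z i).IsSymm) (hi : ∀ i, IsIdempotentElem (Z i)) {w : ι → ℝ} (hw : ∀ i, 0 ≤ w i)
    (hw1 : ∑ i, w i = 1) : lamMinPos (∑ i, w i • Z i) ≤ 1 := by
  refine lamMinPos_le_one (posSemidef_sum_smul_of_isProj hs hi hw) fun v => ?_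
  have hnonneg : 0 ≤ ∑ i, w i * (projStep Z i v ⬝ᵥ projStep Z i v) :=
    Finset.sum_nonneg fun i _ =>
      mul_nonneg (hw i) (by simpa using dotProduct_self_star_nonneg (projStep Z i v))
  linarith [sum_mul_projStep_dotProduct_self hs hi hw1 v]

theorem sum_prod_mul_traj_projStep_le [Fintype ι] {m : ℕ} {Z : ι → Matrix (Fin m) (Fin m) ℝ}
    (hs : ∀ i, (Z i).IsSymm) (hi : ∀ i, IsIdempotentElem (Z i)) {w : ι → ℝ} (hw : ∀ i, 0 ≤ w i)
    (hw1 : ∑ i, w i = 1) (hker : ∀ i z, (∑ i, w i • Z i) *ᵥ z = 0 → Z i *ᵥ z = 0)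
    {v : Fin m → ℝ} (hv : ∀ z, (∑ i, w i • Z i) *ᵥ z = 0 → v ⬝ᵥ z = 0) (k : ℕ) :
    ∑ c : Fin k → ι, (∏ t, w (c t)) * (traj (projStep Z) v k c ⬝ᵥ traj (projStep Z) v k c) ≤
      (1 - lamMinPos (∑ i, w i • Z i)) ^ k * (v ⬝ᵥ v) := by
  refine sum_prod_mul_traj_le (step := projStep Z) (F := fun u => u ⬝ᵥ u) hw
    (sub_nonneg.2 (lamMinPos_sum_smul_le_one hs hi hw hw1))
    (S := {u | ∀ z, (∑ i, w i • Z i) *ᵥ z = 0 → u ⬝ᵥ z = 0}) ?_ ?_ hv k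
  · intro i u hu z hz
    rw [projStep, sub_dotProduct, ← (hs i).dotProduct_mulVec_comm, hker i z hz, hu z hz,
      dotProduct_zero, sub_zero]
  · intro u hu
    rw [sum_mul_projStep_dotProduct_self hs hi hw1, sub_mul, one_mul]
    linarith [lamMinPos_mul_dotProduct_le (posSemidef_sum_smul_of_isProj hs hi hw) hu]

end ProjStep

section SketchAndProject

variable {m n d l : ℕ} {A : Matrix (Fin m) (Fin n) ℝ} {b : Fin m → ℝ}
  {B C Bih : Matrix (Fin n) (Fin n) ℝ} {Q : Matrix (Fin d) (Fin m) ℝ} {xstar : Fin n → ℝ}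

def IsSketchProjection (B : Matrix (Fin n) (Fin n) ℝ) (A : Matrix (Fin m) (Fin n) ℝ)
    (b : Fin m → ℝ) (Q : Matrix (Fin d) (Fin m) ℝ) (S : Matrix (Fin l) (Fin m) ℝ)
    (x x' : Fin n → ℝ) : Prop :=
  (S * A) *ᵥ x' = S *ᵥ b ∧ (Q * A) *ᵥ x' = Q *ᵥ b ∧
    ∀ y, (S * A) *ᵥ y = S *ᵥ b → (Q * A) *ᵥ y = Q *ᵥ b →
      (x' - x) ⬝ᵥ (B *ᵥ (x' - x)) ≤ (y - x) ⬝ᵥ (B *ᵥ (y - x))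

theorem IsSketchProjection.dotProduct_mulVec_sub_eq_zero {S : Matrix (Fin l) (Fin m) ℝ}
    {x x' : Fin n → ℝ} (hx' : IsSketchProjection B A b Q S x x') (hB : B.PosSemidef)
    {h : Fin n → ℝ} (hSh : (S * A) *ᵥ h = 0) (hQh : (Q * A) *ᵥ h = 0) :
    h ⬝ᵥ (B *ᵥ (x' - x)) = 0 := by
  obtain ⟨hSx', hQx', hmin⟩ := hx'
  exact hB.dotProduct_mulVec_sub_eq_zero_of_forall_le
    (F := {y | (S * A) *ᵥ y = S *ᵥ b ∧ (Q * A) *ᵥ y = Q *ᵥ b}) (fun y hy => hmin y hy.1 hy.2)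
    fun t => by simp [mulVec_add, mulVec_smul, hSh, hQh, hSx', hQx']

theorem IsSketchProjection.dotProduct_mulVec_sub_eq_zero_of_mulVec_eq_zero
    {S : Matrix (Fin l) (Fin m) ℝ} {x x' : Fin n → ℝ} (hx' : IsSketchProjection B A b Q S x x')
    (hB : B.PosSemidef) (hx : ∀ h, A *ᵥ h = 0 → h ⬝ᵥ (B *ᵥ (x - xstar)) = 0) {h : Fin n → ℝ}
    (hh : A *ᵥ h = 0) : h ⬝ᵥ (B *ᵥ (x' - xstar)) = 0 := by
  have hAh : ∀ {k} (T : Matrix (Fin k) (Fin m) ℝ), (T * A) *ᵥ h = 0 := fun T => by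
    rw [← mulVec_mulVec, hh, mulVec_zero]
  rw [← sub_add_sub_cancel x' x, mulVec_add, dotProduct_add,
    hx'.dotProduct_mulVec_sub_eq_zero hB (hAh S) (hAh Q), hx h hh, add_zero]

theorem dotProduct_mulVec_sub_eq_zero_of_forall_le_of_mulVec_eq_zero (hB : B.PosSemidef)
    {x0 : Fin n → ℝ} (hxstar : A *ᵥ xstar = b)
    (hmin : ∀ y, A *ᵥ y = b →
      (xstar - x0) ⬝ᵥ (B *ᵥ (xstar - x0)) ≤ (y - x0) ⬝ᵥ (B *ᵥ (y - x0)))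
    {h : Fin n → ℝ} (hh : A *ᵥ h = 0) : h ⬝ᵥ (B *ᵥ (x0 - xstar)) = 0 := by
  rw [← neg_sub, mulVec_neg, dotProduct_neg, neg_eq_zero]
  exact hB.dotProduct_mulVec_sub_eq_zero_of_forall_le (F := {y | A *ᵥ y = b}) hmin
    fun t => by simp [mulVec_add, mulVec_smul, hh, hxstar]

theorem mul_mulVec_mulVec_of_mul_eq_one (hBihC : Bih * C = 1) {k : ℕ}
    (T : Matrix (Fin k) (Fin n) ℝ) (y : Fin n → ℝ) : (T * Bih) *ᵥ (C *ᵥ y) = T *ᵥ y := by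
  rw [mulVec_mulVec, Matrix.mul_assoc, hBihC, Matrix.mul_one]

theorem mulVec_mul_pinv_mul_eq_zero {R : Matrix (Fin 1) (Fin n) ℝ} {Rp : Matrix (Fin n) (Fin 1) ℝ}
    {M : Matrix (Fin m) (Fin n) ℝ} {s : Fin m → ℝ} (hR : R = of fun _ j => (s ᵥ* M) j)
    {z : Fin n → ℝ} (hz : s ⬝ᵥ (M *ᵥ z) = 0) : (Rp * R) *ᵥ z = 0 := by
  have hRz : R *ᵥ z = 0 := funext fun _ => by
    rw [hR, Pi.zero_apply, ← hz, dotProduct_mulVec]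
    rfl
  rw [← mulVec_mulVec, hRz, mulVec_zero]

theorem mulVec_mul_pinv_mul_eq_zero_of_mulVec_eq_zero {R : Matrix (Fin 1) (Fin n) ℝ}
    {Rp : Matrix (Fin n) (Fin 1) ℝ} {N1 : Matrix (Fin n) (Fin d) ℝ} {s : Fin m → ℝ}
    (hR : R = of fun _ j => (s ᵥ* (A * Bih * (1 - N1 * (Q * A * Bih)))) j) {z : Fin n → ℝ}
    (hQz : (Q * A) *ᵥ (Bih *ᵥ z) = 0) (hsz : s ⬝ᵥ (A *ᵥ (Bih *ᵥ z)) = 0) :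
    (Rp * R) *ᵥ z = 0 := by
  refine mulVec_mul_pinv_mul_eq_zero hR ?_
  rwa [← mulVec_mulVec, sub_mulVec, one_mulVec, ← mulVec_mulVec z N1, ← mulVec_mulVec z (Q * A),
    hQz, mulVec_zero, sub_zero, ← mulVec_mulVec]

theorem mulVec_dotProduct_eq_zero_of_mulVec_eq_zero (hCs : C.IsSymm) (hCC : C * C = B)
    (hCBih : C * Bih = 1) {N1 : Matrix (Fin n) (Fin d) ℝ} (hN1 : (N1 * (Q * A * Bih)).IsSymm)
    {e : Fin n → ℝ} (hQe : (Q * A) *ᵥ e = 0) (he : ∀ h, A *ᵥ h = 0 → h ⬝ᵥ (B *ᵥ e) = 0)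
    {z : Fin n → ℝ} (hz : (A * Bih * (1 - N1 * (Q * A * Bih))) *ᵥ z = 0) :
    (C *ᵥ e) ⬝ᵥ z = 0 := by
  set P := 1 - N1 * (Q * A * Bih)
  have hsplit : z = C *ᵥ (Bih *ᵥ (P *ᵥ z)) + (N1 * (Q * A * Bih)) *ᵥ z := by
    rw [mulVec_mulVec, hCBih, one_mulVec, sub_mulVec, one_mulVec, sub_add_cancel]
  have hM0Ce : (Q * A * Bih) *ᵥ (C *ᵥ e) = 0 := by
    rw [mul_mulVec_mulVec_of_mul_eq_one (mul_eq_one_comm.1 hCBih), hQe]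
  rw [hsplit, dotProduct_add, hCs.mulVec_dotProduct_mulVec_eq hCC,
    he _ (by rw [mulVec_mulVec, mulVec_mulVec, hz]), hN1.dotProduct_mulVec_comm, ← mulVec_mulVec,
    hM0Ce, mulVec_zero, zero_dotProduct, add_zero]

theorem IsSketchProjection.dotProduct_mulVec_le_traj_projStep {ι : Type*}
    {Z : ι → Matrix (Fin n) (Fin n) ℝ} (hs : ∀ i, (Z i).IsSymm) (hB : B.PosSemidef)
    (hCs : C.IsSymm) (hCC : C * C = B) (hCBih : C * Bih = 1) (hxstar : A *ᵥ xstar = b)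
    {S : Matrix (Fin l) (Fin m) ℝ} {c : Fin l → ι}
    (hZ : ∀ z, (Q * A) *ᵥ (Bih *ᵥ z) = 0 → (S * A) *ᵥ (Bih *ᵥ z) = 0 → ∀ t, Z (c t) *ᵥ z = 0)
    {x x' : Fin n → ℝ} (hx' : IsSketchProjection B A b Q S x x') :
    (x' - xstar) ⬝ᵥ (B *ᵥ (x' - xstar)) ≤
      traj (projStep Z) (C *ᵥ (x - xstar)) l c ⬝ᵥ traj (projStep Z) (C *ᵥ (x - xstar)) l c := by
  set u := C *ᵥ (x - xstar)
  set v := traj (projStep Z) u l c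
  -- `u'` lies in the subspace `K` of the hypotheses of `hperp`; `u - u'` is orthogonal to `K`
  -- by the optimality of `x'`, and `v - u` because every `Z (c t)` vanishes on `K`
  set u' := C *ᵥ (x' - xstar)
  have hperp : ∀ z, (Q * A) *ᵥ (Bih *ᵥ z) = 0 → (S * A) *ᵥ (Bih *ᵥ z) = 0 →
      (v - u') ⬝ᵥ z = 0 := by
    intro z hQz hSz
    have hv : (v - u) ⬝ᵥ z = 0 := by
      rw [sub_dotProduct, traj_projStep_dotProduct hs u l c (hZ z hQz hSz), sub_self]
    have hu : (u - u') ⬝ᵥ z = 0 := by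
      rw [← mulVec_sub, sub_sub_sub_cancel_right, ← one_mulVec z, ← hCBih, ← mulVec_mulVec,
        hCs.mulVec_dotProduct_mulVec_eq hCC, ← neg_sub, mulVec_neg, dotProduct_neg,
        hx'.dotProduct_mulVec_sub_eq_zero hB hSz hQz, neg_zero]
    rw [← sub_add_sub_cancel v u u', add_dotProduct, hv, hu, add_zero]
  have hBihC : Bih *ᵥ u' = x' - xstar := by
    rw [mulVec_mulVec, mul_eq_one_comm.1 hCBih, one_mulVec]
  rw [← hCs.mulVec_dotProduct_mulVec_eq hCC]
  refine dotProduct_self_le_of_dotProduct_sub_eq_zero (hperp u' ?_ ?_)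
  · rw [hBihC, mulVec_sub, hx'.2.1, ← mulVec_mulVec, hxstar, sub_self]
  · rw [hBihC, mulVec_sub, hx'.1, ← mulVec_mulVec, hxstar, sub_self]

theorem sum_prod_mul_dotProduct_mulVec_le {ι : Type*} [Fintype ι]
    {Z : ι → Matrix (Fin n) (Fin n) ℝ} (hs : ∀ i, (Z i).IsSymm) (hi : ∀ i, IsIdempotentElem (Z i))
    {w : ι → ℝ} (hw : ∀ i, 0 ≤ w i) (hw1 : ∑ i, w i = 1)
    (hker : ∀ i z, (∑ i, w i • Z i) *ᵥ z = 0 → Z i *ᵥ z = 0) (hB : B.PosSemidef)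
    (hCs : C.IsSymm) (hCC : C * C = B) (hCBih : C * Bih = 1) (hxstar : A *ᵥ xstar = b)
    {S : (Fin l → ι) → Matrix (Fin l) (Fin m) ℝ}
    (hZ : ∀ c z, (Q * A) *ᵥ (Bih *ᵥ z) = 0 → (S c * A) *ᵥ (Bih *ᵥ z) = 0 →
      ∀ t, Z (c t) *ᵥ z = 0)
    {x : Fin n → ℝ} (hx : ∀ z, (∑ i, w i • Z i) *ᵥ z = 0 → (C *ᵥ (x - xstar)) ⬝ᵥ z = 0)
    {x' : (Fin l → ι) → Fin n → ℝ} (hx' : ∀ c, IsSketchProjection B A b Q (S c) x (x' c)) :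
    ∑ c, (∏ t, w (c t)) * ((x' c - xstar) ⬝ᵥ (B *ᵥ (x' c - xstar))) ≤
      (1 - lamMinPos (∑ i, w i • Z i)) ^ l * ((x - xstar) ⬝ᵥ (B *ᵥ (x - xstar))) := by
  rw [← hCs.mulVec_dotProduct_mulVec_eq hCC]
  refine le_trans ?_ (sum_prod_mul_traj_projStep_le hs hi hw hw1 hker hx l)
  gcongr with c
  · exact Finset.prod_nonneg fun t _ => hw _
  · exact (hx' c).dotProduct_mulVec_le_traj_projStep hs hB hCs hCC hCBih hxstar (hZ c)

end SketchAndProject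

theorem stmt_7_general {m n d l N : ℕ}
    (A : Matrix (Fin m) (Fin n) ℝ) (b : Fin m → ℝ)
    (B : Matrix (Fin n) (Fin n) ℝ) (hB : B.PosDef)
    (Q : Matrix (Fin d) (Fin m) ℝ)
    (Bih : Matrix (Fin n) (Fin n) ℝ) (hBih : Bih = ((hB.posSemidef.1.eigenvectorUnitary : Matrix (Fin n) (Fin n) ℝ) *
      diagonal (fun i => Real.sqrt (hB.posSemidef.1.eigenvalues i)) *
      (star (hB.posSemidef.1.eigenvectorUnitary : Matrix (Fin n) (Fin n) ℝ)))⁻¹)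
    (N1 : Matrix (Fin n) (Fin d) ℝ) (hN1 : IsMoorePenrose (Q * A * Bih) N1)
    (P : Matrix (Fin n) (Fin n) ℝ) (hP : P = 1 - N1 * (Q * A * Bih))
    -- the finitely supported distribution of the i.i.d. rows `s₁, …, s_ℓ`
    (w : Fin N → ℝ) (hw : ∀ i, 0 ≤ w i) (hw1 : ∑ i, w i = 1)
    (svec : Fin N → (Fin m → ℝ))
    -- the row vector `R i = s_iᵀ A B^{-1/2} P`, its pseudoinverse `Rp i`, and the
    -- rank-one projector `Z1 i = (R i)† (R i)` onto `range(P B^{-1/2} Aᵀ s_i)`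
    (R : Fin N → Matrix (Fin 1) (Fin n) ℝ)
    (hR : ∀ i, R i = Matrix.of fun _ j => (svec i ᵥ* (A * Bih * P)) j)
    (Rp : Fin N → Matrix (Fin n) (Fin 1) ℝ)
    (hRp : ∀ i, IsMoorePenrose (R i) (Rp i))
    (Z1 : Fin N → Matrix (Fin n) (Fin n) ℝ)
    (hZ1 : ∀ i, Z1 i = Rp i * R i)
    -- the expected projector `EZ1 = E[Z₁]`
    (EZ1 : Matrix (Fin n) (Fin n) ℝ) (hEZ1 : EZ1 = ∑ i, w i • Z1 i)
    -- exactness condition: `null(E[Z₁]) = null(A B^{-1/2} P)`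
    (hexact : ∀ v : Fin n → ℝ, EZ1 *ᵥ v = 0 ↔ (A * Bih * P) *ᵥ v = 0)
    -- the initial iterate satisfies `Q A x0 = Q b`
    (x0 : Fin n → ℝ) (hx0 : (Q * A) *ᵥ x0 = Q *ᵥ b)
    -- `x*` is the minimizer of `‖x - x0‖_B` over `{x : Ax = b}`
    (xstar : Fin n → ℝ) (hxstar_sol : A *ᵥ xstar = b)
    (hxstar_min : ∀ y : Fin n → ℝ, A *ᵥ y = b →
      (xstar - x0) ⬝ᵥ (B *ᵥ (xstar - x0)) ≤ (y - x0) ⬝ᵥ (B *ᵥ (y - x0)))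
    -- one step of the method: a draw `c : Fin l → Fin N` gives the sketching matrix
    -- `S_ℓ` with rows `svec (c 0), …, svec (c (l-1))`; `step c x` minimizes `‖· - x‖_B`
    -- subject to `S_ℓ A x = S_ℓ b` and `Q A x = Q b`
    (step : (Fin l → Fin N) → (Fin n → ℝ) → (Fin n → ℝ))
    (hstep : ∀ (c : Fin l → Fin N) (x : Fin n → ℝ), (Q * A) *ᵥ x = Q *ᵥ b →
      ((Matrix.of fun t j => svec (c t) j) * A) *ᵥ step c x =
          (Matrix.of fun t j => svec (c t) j) *ᵥ b ∧
      (Q * A) *ᵥ step c x = Q *ᵥ b ∧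
      ∀ y : Fin n → ℝ,
        ((Matrix.of fun t j => svec (c t) j) * A) *ᵥ y =
            (Matrix.of fun t j => svec (c t) j) *ᵥ b →
        (Q * A) *ᵥ y = Q *ᵥ b →
        (step c x - x) ⬝ᵥ (B *ᵥ (step c x - x)) ≤ (y - x) ⬝ᵥ (B *ᵥ (y - x))) :
    ∀ k : ℕ,
      ∑ ω : Fin k → (Fin l → Fin N), (∏ i, ∏ t, w (ω i t)) *
          ((traj step x0 k ω - xstar) ⬝ᵥ (B *ᵥ (traj step x0 k ω - xstar))) ≤
        (1 - lamMinPos EZ1) ^ (l * k) * ((x0 - xstar) ⬝ᵥ (B *ᵥ (x0 - xstar))) := by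
  obtain ⟨C, hCs, hCC, hCBih⟩ := hB.exists_isSymm_mul_self_eq_and_mul_inv_eq_one
  rw [← hBih] at hCBih
  subst hP hEZ1
  have hZs : ∀ i, (Z1 i).IsSymm := fun i => hZ1 i ▸ (hRp i).isSymm_mul
  have hZi : ∀ i, IsIdempotentElem (Z1 i) := fun i => hZ1 i ▸ (hRp i).isIdempotentElem_mul
  have hker : ∀ i z, (∑ i, w i • Z1 i) *ᵥ z = 0 → Z1 i *ᵥ z = 0 := fun i z hz =>
    hZ1 i ▸ mulVec_mul_pinv_mul_eq_zero (hR i) (by rw [(hexact z).1 hz, dotProduct_zero])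
  have hZ : ∀ (c : Fin l → Fin N) z, (Q * A) *ᵥ (Bih *ᵥ z) = 0 →
      ((of fun t j => svec (c t) j) * A) *ᵥ (Bih *ᵥ z) = 0 → ∀ t, Z1 (c t) *ᵥ z = 0 :=
    fun c z hQz hSz t => hZ1 _ ▸ mulVec_mul_pinv_mul_eq_zero_of_mulVec_eq_zero (hR _) hQz
      (congrFun ((mulVec_mulVec _ _ _).trans hSz) t)
  have hproj : ∀ c x, (Q * A) *ᵥ x = Q *ᵥ b →
      IsSketchProjection B A b Q (of fun t j => svec (c t) j) x (step c x) := hstep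
  intro k
  rw [pow_mul]
  refine sum_prod_mul_traj_le (step := step) (p := fun c => ∏ t, w (c t))
    (F := fun x => (x - xstar) ⬝ᵥ (B *ᵥ (x - xstar))) (fun c => Finset.prod_nonneg fun t _ => hw _)
    (pow_nonneg (sub_nonneg.2 (lamMinPos_sum_smul_le_one hZs hZi hw hw1)) l)
    (S := {x | (Q * A) *ᵥ x = Q *ᵥ b ∧ ∀ h, A *ᵥ h = 0 → h ⬝ᵥ (B *ᵥ (x - xstar)) = 0}) ?_ ?_
    ⟨hx0, fun h => dotProduct_mulVec_sub_eq_zero_of_forall_le_of_mulVec_eq_zero hB.posSemidef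
      hxstar_sol hxstar_min⟩ k
  · rintro c x ⟨hQx, hx⟩
    exact ⟨(hproj c x hQx).2.1, fun h =>
      (hproj c x hQx).dotProduct_mulVec_sub_eq_zero_of_mulVec_eq_zero hB.posSemidef hx⟩
  · rintro x ⟨hQx, hx⟩
    refine sum_prod_mul_dotProduct_mulVec_le hZs hZi hw hw1 hker hB.posSemidef hCs hCC hCBih
      hxstar_sol hZ (fun z hz => ?_) (x' := fun c => step c x) fun c => hproj c x hQx
    refine mulVec_dotProduct_eq_zero_of_mulVec_eq_zero hCs hCC hCBih hN1.2.2.2 ?_ hx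
      ((hexact z).1 hz)
    rw [mulVec_sub, hQx, ← mulVec_mulVec, hxstar_sol, sub_self]

/-- block size and convergence rate. If the sketching matrix `S_ℓ`
has `ℓ` i.i.d. rows drawn from a finitely supported distribution (weights `w i` on
vectors `svec i`), `Z₁ = (s₁ᵀ A B^{−1/2} P)† s₁ᵀ A B^{−1/2} P`, and
`null(E[Z₁]) = null(A B^{−1/2} P)`, then the subspace-constrained sketch-and-project
iterates satisfy `E‖x^k − x*‖_B² ≤ (1 − λmin⁺(E[Z₁]))^{ℓk} ‖x^0 − x*‖_B²`. -/
theorem stmt_7 {m n d l N : ℕ}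
    (A : Matrix (Fin m) (Fin n) ℝ) (b : Fin m → ℝ)
    (hconsistent : ∃ x, A *ᵥ x = b)
    (B : Matrix (Fin n) (Fin n) ℝ) (hB : B.PosDef)
    (Q : Matrix (Fin d) (Fin m) ℝ)
    (Bih : Matrix (Fin n) (Fin n) ℝ) (hBih : Bih = ((hB.posSemidef.1.eigenvectorUnitary : Matrix (Fin n) (Fin n) ℝ) *
      diagonal (fun i => Real.sqrt (hB.posSemidef.1.eigenvalues i)) *
      (star (hB.posSemidef.1.eigenvectorUnitary : Matrix (Fin n) (Fin n) ℝ)))⁻¹)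
    (N1 : Matrix (Fin n) (Fin d) ℝ) (hN1 : IsMoorePenrose (Q * A * Bih) N1)
    (P : Matrix (Fin n) (Fin n) ℝ) (hP : P = 1 - N1 * (Q * A * Bih))
    -- the finitely supported distribution of the i.i.d. rows `s₁, …, s_ℓ`
    (w : Fin N → ℝ) (hw : ∀ i, 0 ≤ w i) (hw1 : ∑ i, w i = 1)
    (svec : Fin N → (Fin m → ℝ))
    -- the row vector `R i = s_iᵀ A B^{-1/2} P`, its pseudoinverse `Rp i`, and the
    -- rank-one projector `Z1 i = (R i)† (R i)` onto `range(P B^{-1/2} Aᵀ s_i)`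
    (R : Fin N → Matrix (Fin 1) (Fin n) ℝ)
    (hR : ∀ i, R i = Matrix.of fun _ j => (svec i ᵥ* (A * Bih * P)) j)
    (Rp : Fin N → Matrix (Fin n) (Fin 1) ℝ)
    (hRp : ∀ i, IsMoorePenrose (R i) (Rp i))
    (Z1 : Fin N → Matrix (Fin n) (Fin n) ℝ)
    (hZ1 : ∀ i, Z1 i = Rp i * R i)
    -- the expected projector `EZ1 = E[Z₁]`
    (EZ1 : Matrix (Fin n) (Fin n) ℝ) (hEZ1 : EZ1 = ∑ i, w i • Z1 i)
    -- exactness condition: `null(E[Z₁]) = null(A B^{-1/2} P)`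
    (hexact : ∀ v : Fin n → ℝ, EZ1 *ᵥ v = 0 ↔ (A * Bih * P) *ᵥ v = 0)
    -- the initial iterate satisfies `Q A x0 = Q b`
    (x0 : Fin n → ℝ) (hx0 : (Q * A) *ᵥ x0 = Q *ᵥ b)
    -- `x*` is the minimizer of `‖x - x0‖_B` over `{x : Ax = b}`
    (xstar : Fin n → ℝ) (hxstar_sol : A *ᵥ xstar = b)
    (hxstar_min : ∀ y : Fin n → ℝ, A *ᵥ y = b →
      (xstar - x0) ⬝ᵥ (B *ᵥ (xstar - x0)) ≤ (y - x0) ⬝ᵥ (B *ᵥ (y - x0)))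
    -- one step of the method: a draw `c : Fin l → Fin N` gives the sketching matrix
    -- `S_ℓ` with rows `svec (c 0), …, svec (c (l-1))`; `step c x` minimizes `‖· - x‖_B`
    -- subject to `S_ℓ A x = S_ℓ b` and `Q A x = Q b`
    (step : (Fin l → Fin N) → (Fin n → ℝ) → (Fin n → ℝ))
    (hstep : ∀ (c : Fin l → Fin N) (x : Fin n → ℝ), (Q * A) *ᵥ x = Q *ᵥ b →
      ((Matrix.of fun t j => svec (c t) j) * A) *ᵥ step c x =
          (Matrix.of fun t j => svec (c t) j) *ᵥ b ∧
      (Q * A) *ᵥ step c x = Q *ᵥ b ∧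
      ∀ y : Fin n → ℝ,
        ((Matrix.of fun t j => svec (c t) j) * A) *ᵥ y =
            (Matrix.of fun t j => svec (c t) j) *ᵥ b →
        (Q * A) *ᵥ y = Q *ᵥ b →
        (step c x - x) ⬝ᵥ (B *ᵥ (step c x - x)) ≤ (y - x) ⬝ᵥ (B *ᵥ (y - x))) :
    ∀ k : ℕ,
      ∑ ω : Fin k → (Fin l → Fin N), (∏ i, ∏ t, w (ω i t)) *
          ((traj step x0 k ω - xstar) ⬝ᵥ (B *ᵥ (traj step x0 k ω - xstar))) ≤
        (1 - lamMinPos EZ1) ^ (l * k) * ((x0 - xstar) ⬝ᵥ (B *ᵥ (x0 - xstar))) :=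
  stmt_7_general A b B hB Q Bih hBih N1 hN1 P hP w hw hw1 svec R hR Rp hRp Z1 hZ1 EZ1 hEZ1 hexact x0
    hx0 xstar hxstar_sol hxstar_min step hstep
end

section
/- Let A ∈ ℝ^{n×n} be symmetric positive semidefinite, b ∈ ℝ^n with Ax = b consistent, and x* any solution. Fix S ⊆ [n] of size d and let A° := A − A⟨S⟩ with A⟨S⟩ := A_{:,S} (A_{S,S})† A_{S,:}; assume A°_{j,j} > 0 for exactly the n − d coordinates j ∉ S. Let D be the diagonal matrix with D_{j,j} = A°_{j,j}, and let {x^k}_{k≥0} be the SC-RCD iterates with pivot set S, where each block J consists of ℓ coordinates sampled independently and uniformly at random from {j ∈ [n] : A°_{j,j} > 0}. Then E||x^k − x*||_A² ≤ (1 − λmin⁺(D^{†/2} A° D^{†/2}) / (n − d))^{kℓ} · ||x^0 − x*||_A². -/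
/-!
Write `y = x - x*` for the error and `r = A y` for the residual. The pivot rows of the Nyström
residual vanish, so `r_S = 0` and `A° y = A y` are preserved, and every SC-RCD update moves `y`
along the range of `P = 1 - e_S C`, where the `A`-energy only sees `A°`:
`‖y - P u‖²_A = ‖y‖²_A - 2 uᵀ r + uᵀ A° u`. A block update minimizes this over `u` supported on
the block, so it does at least as well as running its `ℓ` coordinates one after the other; a
single coordinate `j` lowers the energy by `r_j² / A°_{jj}`. Averaged over the uniform choice of
`j`, the decrease is `‖D^{†/2} A° y‖² / (n - d) ≥ λmin⁺(D^{†/2} A° D^{†/2}) ‖y‖²_A / (n - d)`,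
since `B² ⪰ λmin⁺(B) B` for every positive semidefinite `B`. This compounds over the `ℓ`
coordinates of a block and over the `k` iterations.
-/

open Matrix

section Trajectory

variable {V I : Type*} {step : I → V → V}

theorem traj_succ_snoc (x0 : V) {k : ℕ} (ω : Fin k → I) (i : I) :
    traj step x0 (k + 1) (Fin.snoc ω i) = step i (traj step x0 k ω) := by
  simp only [traj, Fin.snoc_last, Fin.init_snoc]

theorem traj_invariant {Q : V → Prop} (hQ : ∀ i v, Q v → Q (step i v)) {x0 : V} (hx0 : Q x0) :
    ∀ (k : ℕ) (ω : Fin k → I), Q (traj step x0 k ω)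
  | 0, _ => hx0
  | k + 1, ω => hQ _ _ (traj_invariant hQ hx0 k (Fin.init ω))

theorem sum_prod_mul_traj_le_s13 [Fintype I] {w : I → ℝ} {Φ : V → ℝ} {Q : V → Prop} {ρ : ℝ}
    (hw : ∀ i, 0 ≤ w i) (hρ : 0 ≤ ρ) (hQ : ∀ i v, Q v → Q (step i v))
    (hstep : ∀ v, Q v → ∑ i, w i * Φ (step i v) ≤ ρ * Φ v) {x0 : V} (hx0 : Q x0) (k : ℕ) :
    ∑ ω : Fin k → I, (∏ j, w (ω j)) * Φ (traj step x0 k ω) ≤ ρ ^ k * Φ x0 := by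
  induction k with
  | zero => simp [traj]
  | succ k ih =>
    rw [← (Fin.snocEquiv fun _ => I).sum_comp, Fintype.sum_prod_type_right]
    calc ∑ ω : Fin k → I, ∑ i, (∏ j, w (Fin.snoc ω i j)) * Φ (traj step x0 (k + 1) (Fin.snoc ω i))
        = ∑ ω : Fin k → I, (∏ j, w (ω j)) * ∑ i, w i * Φ (step i (traj step x0 k ω)) := by
          simp only [Finset.mul_sum, Fin.prod_univ_castSucc, Fin.snoc_castSucc, Fin.snoc_last,
            traj_succ_snoc, mul_assoc]
      _ ≤ ∑ ω : Fin k → I, (∏ j, w (ω j)) * (ρ * Φ (traj step x0 k ω)) := by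
          gcongr with ω
          · exact Finset.prod_nonneg fun j _ => hw (ω j)
          · exact hstep _ (traj_invariant hQ hx0 k ω)
      _ = ρ * ∑ ω : Fin k → I, (∏ j, w (ω j)) * Φ (traj step x0 k ω) := by
          rw [Finset.mul_sum]; exact Finset.sum_congr rfl fun _ _ => by ring
      _ ≤ ρ ^ (k + 1) * Φ x0 := by
          rw [pow_succ', mul_assoc]; exact mul_le_mul_of_nonneg_left ih hρ

end Trajectory

theorem dotProduct_mulVec_comm_of_transpose_eq {m : Type*} [Fintype m] {M : Matrix m m ℝ}
    (hM : Mᵀ = M) (x y : m → ℝ) : x ⬝ᵥ (M *ᵥ y) = y ⬝ᵥ (M *ᵥ x) := by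
  simpa only [hM] using dotProduct_transpose_mulVec M x y

section MoorePenrose

variable {k : Type*} [Fintype k] {M P Q : Matrix k k ℝ}

theorem IsMoorePenrose.unique (hP : IsMoorePenrose M P) (hQ : IsMoorePenrose M Q) : P = Q := by
  obtain ⟨hP1, hP2, hP3, hP4⟩ := hP
  obtain ⟨hQ1, hQ2, hQ3, hQ4⟩ := hQ
  have hMt : Mᵀ * Qᵀ * Mᵀ = Mᵀ := by
    simpa only [transpose_mul, Matrix.mul_assoc] using congrArg transpose hQ1
  have hMP : M * P = M * Q := by
    calc M * P = Pᵀ * (Mᵀ * Qᵀ * Mᵀ) := by rw [hMt, ← transpose_mul, hP3]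
      _ = (M * P)ᵀ * (M * Q)ᵀ := by simp only [transpose_mul, Matrix.mul_assoc]
      _ = M * Q := by rw [hP3, hQ3, ← Matrix.mul_assoc, hP1]
  have hPM : P * M = Q * M := by
    calc P * M = Mᵀ * Qᵀ * Mᵀ * Pᵀ := by rw [hMt, ← transpose_mul, hP4]
      _ = (Q * M)ᵀ * (P * M)ᵀ := by simp only [transpose_mul, Matrix.mul_assoc]
      _ = Q * M := by rw [hP4, hQ4, Matrix.mul_assoc, ← Matrix.mul_assoc M, hP1]
  rw [← hP2, hPM, Matrix.mul_assoc, hMP, ← Matrix.mul_assoc, hQ2]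

theorem IsMoorePenrose.transpose_eq (hM : Mᵀ = M) (hP : IsMoorePenrose M P) : Pᵀ = P := by
  obtain ⟨h1, h2, h3, h4⟩ := hP
  refine IsMoorePenrose.unique ⟨?_, ?_, ?_, ?_⟩ ⟨h1, h2, h3, h4⟩
  · simpa only [transpose_mul, hM, Matrix.mul_assoc] using congrArg transpose h1
  · simpa only [transpose_mul, hM, Matrix.mul_assoc] using congrArg transpose h2
  · rw [transpose_mul, transpose_transpose, hM, ← h4, transpose_mul, hM]
  · rw [transpose_mul, transpose_transpose, hM, ← h3, transpose_mul, hM]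

end MoorePenrose

namespace Matrix.PosSemidef

variable {m k : Type*} [Fintype m] [Fintype k] {M : Matrix m m ℝ}

omit [Fintype m] in
theorem transpose_eq (hM : M.PosSemidef) : Mᵀ = M := by
  simpa [conjTranspose_eq_transpose_of_trivial] using hM.1.eq

theorem transpose_mul_mul (hM : M.PosSemidef) (B : Matrix m k ℝ) : (Bᵀ * M * B).PosSemidef := by
  simpa [conjTranspose_eq_transpose_of_trivial] using hM.conjTranspose_mul_mul_same B

theorem dotProduct_mulVec_nonneg' (hM : M.PosSemidef) (x : m → ℝ) : 0 ≤ x ⬝ᵥ (M *ᵥ x) := by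
  simpa using hM.dotProduct_mulVec_nonneg x

omit [Fintype k] in
open scoped MatrixOrder in
theorem mul_eq_zero_of_mul_mul_transpose_eq_zero (hM : M.PosSemidef) {B : Matrix k m ℝ}
    (hB : B * M * Bᵀ = 0) : B * M = 0 := by
  classical
  obtain ⟨R, rfl⟩ := CStarAlgebra.nonneg_iff_eq_star_mul_self.mp hM.nonneg
  have hBR : B * Rᴴ = 0 := by
    rw [← self_mul_conjTranspose_eq_zero, conjTranspose_mul, conjTranspose_conjTranspose,
      conjTranspose_eq_transpose_of_trivial B, ← hB, star_eq_conjTranspose]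
    simp only [Matrix.mul_assoc]
  rw [star_eq_conjTranspose, ← Matrix.mul_assoc, hBR, Matrix.zero_mul]

theorem mul_pinv_mul_eq (hM : M.PosSemidef) (B : Matrix k m ℝ) {P : Matrix k k ℝ}
    (hP : IsMoorePenrose (B * M * Bᵀ) P) : B * M * Bᵀ * P * (B * M) = B * M := by
  classical
  obtain ⟨h1, -, h3, -⟩ := hP
  have hKt : (1 - B * M * Bᵀ * P)ᵀ = 1 - B * M * Bᵀ * P := by
    rw [transpose_sub, transpose_one, h3]
  have hK : (1 - B * M * Bᵀ * P) * (B * M * Bᵀ) = 0 := by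
    rw [Matrix.sub_mul, Matrix.one_mul, h1, sub_self]
  have hzero := hM.mul_eq_zero_of_mul_mul_transpose_eq_zero (B := (1 - B * M * Bᵀ * P) * B) (by
    rw [transpose_mul, hKt]
    simp only [← Matrix.mul_assoc] at hK ⊢
    rw [hK, Matrix.zero_mul])
  rw [Matrix.mul_assoc, Matrix.sub_mul, Matrix.one_mul, sub_eq_zero] at hzero
  simpa only [Matrix.mul_assoc] using hzero.symm

theorem apply_eq_zero_of_diag_eq_zero [DecidableEq m] (hM : M.PosSemidef) {i : m}
    (hi : M i i = 0) (j : m) : M i j = 0 := by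
  have h := (hM.dotProduct_mulVec_zero_iff (Pi.single i 1)).mp (by simp [hi])
  rw [← hM.transpose_eq]
  simpa using congrFun h j

theorem quadratic_le_of_mulVec_eq (hM : M.PosSemidef) {z r : m → ℝ} (hz : M *ᵥ z = r)
    (γ : m → ℝ) : z ⬝ᵥ (M *ᵥ z) - 2 * (z ⬝ᵥ r) ≤ γ ⬝ᵥ (M *ᵥ γ) - 2 * (γ ⬝ᵥ r) := by
  have h := hM.dotProduct_mulVec_nonneg' (γ - z)
  rw [mulVec_sub, dotProduct_sub, sub_dotProduct, sub_dotProduct, hz,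
    dotProduct_mulVec_comm_of_transpose_eq hM.transpose_eq z γ, hz] at h
  rw [hz]
  linarith

end Matrix.PosSemidef

section Nystrom

variable {m s : Type*} [Fintype m] [Fintype s]

/-- With `E` the coordinate selector of a pivot set `S` and `W = (A_{S,S})†`, this is
`A° = A - A⟨S⟩`. -/
def nystromResidual (A : Matrix m m ℝ) (E : Matrix m s ℝ) (W : Matrix s s ℝ) : Matrix m m ℝ :=
  A - A * E * W * (Eᵀ * A)

/-- `1 - e_S C` with `C = (A_{S,S})† A_{S,:}`: every SC-RCD update moves the iterate along
its range. -/
def nystromProj [DecidableEq m] (A : Matrix m m ℝ) (E : Matrix m s ℝ) (W : Matrix s s ℝ) :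
    Matrix m m ℝ :=
  1 - E * W * (Eᵀ * A)

variable {A : Matrix m m ℝ} {E : Matrix m s ℝ} {W : Matrix s s ℝ}

theorem mul_nystromProj [DecidableEq m] : A * nystromProj A E W = nystromResidual A E W := by
  simp only [nystromProj, nystromResidual, Matrix.mul_sub, Matrix.mul_one, Matrix.mul_assoc]

theorem nystromResidual_mulVec_of_transpose_mulVec_eq_zero {y : m → ℝ}
    (hy : Eᵀ *ᵥ (A *ᵥ y) = 0) : nystromResidual A E W *ᵥ y = A *ᵥ y := by
  simp only [nystromResidual, sub_mulVec, ← mulVec_mulVec, hy, mulVec_zero, sub_zero]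

variable (hA : A.PosSemidef) (hW : IsMoorePenrose (Eᵀ * A * E) W)
include hA hW

theorem transpose_mul_nystromResidual : Eᵀ * nystromResidual A E W = 0 := by
  have h := hA.mul_pinv_mul_eq Eᵀ (P := W) (by rwa [transpose_transpose])
  rw [transpose_transpose] at h
  rw [nystromResidual, Matrix.mul_sub, sub_eq_zero]
  conv_lhs => rw [← h]
  simp only [Matrix.mul_assoc]

theorem nystromResidual_transpose : (nystromResidual A E W)ᵀ = nystromResidual A E W := by
  have hAt := hA.transpose_eq
  have hWt : Wᵀ = W :=
    hW.transpose_eq (by rw [transpose_mul, transpose_mul, transpose_transpose, hAt, Matrix.mul_assoc])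
  simp only [nystromResidual, transpose_sub, transpose_mul, transpose_transpose, hAt, hWt,
    Matrix.mul_assoc]

theorem nystromResidual_mul_self : nystromResidual A E W * E = 0 := by
  have h := congrArg transpose (transpose_mul_nystromResidual hA hW)
  rwa [transpose_mul, transpose_transpose, nystromResidual_transpose hA hW, transpose_zero] at h

variable [DecidableEq m]

theorem nystromProj_transpose_mul : (nystromProj A E W)ᵀ * A = nystromResidual A E W := by
  have h := congrArg transpose (mul_nystromProj (A := A) (E := E) (W := W))
  rwa [transpose_mul, hA.transpose_eq, nystromResidual_transpose hA hW] at h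

theorem nystromResidual_mul_nystromProj :
    nystromResidual A E W * nystromProj A E W = nystromResidual A E W := by
  rw [nystromProj, Matrix.mul_sub, Matrix.mul_one, sub_eq_self]
  simp only [← Matrix.mul_assoc, nystromResidual_mul_self hA hW, Matrix.zero_mul]

theorem nystromResidual_posSemidef : (nystromResidual A E W).PosSemidef := by
  have h := hA.transpose_mul_mul (nystromProj A E W)
  rwa [nystromProj_transpose_mul hA hW, nystromResidual_mul_nystromProj hA hW] at h

theorem transpose_mulVec_mulVec_sub_nystromProj {y : m → ℝ} (hy : Eᵀ *ᵥ (A *ᵥ y) = 0)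
    (u : m → ℝ) : Eᵀ *ᵥ (A *ᵥ (y - nystromProj A E W *ᵥ u)) = 0 := by
  rw [mulVec_sub, mulVec_sub, hy, mulVec_mulVec, mulVec_mulVec, Matrix.mul_assoc,
    mul_nystromProj, transpose_mul_nystromResidual hA hW, zero_mulVec, sub_zero]

theorem energy_sub_nystromProj {y : m → ℝ} (hy : Eᵀ *ᵥ (A *ᵥ y) = 0) (u : m → ℝ) :
    (y - nystromProj A E W *ᵥ u) ⬝ᵥ (A *ᵥ (y - nystromProj A E W *ᵥ u)) =
      y ⬝ᵥ (A *ᵥ y) - 2 * (u ⬝ᵥ (A *ᵥ y)) + u ⬝ᵥ (nystromResidual A E W *ᵥ u) := by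
  have hAt := hA.transpose_eq
  have hcross : y ⬝ᵥ (A *ᵥ (nystromProj A E W *ᵥ u)) = u ⬝ᵥ (A *ᵥ y) := by
    rw [mulVec_mulVec, mul_nystromProj,
      dotProduct_mulVec_comm_of_transpose_eq (nystromResidual_transpose hA hW),
      nystromResidual_mulVec_of_transpose_mulVec_eq_zero hy]
  have hquad : (nystromProj A E W *ᵥ u) ⬝ᵥ (A *ᵥ (nystromProj A E W *ᵥ u)) =
      u ⬝ᵥ (nystromResidual A E W *ᵥ u) := by
    rw [dotProduct_comm, ← dotProduct_transpose_mulVec, mulVec_mulVec, mulVec_mulVec,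
      nystromProj_transpose_mul hA hW, nystromResidual_mul_nystromProj hA hW]
  rw [mulVec_sub, dotProduct_sub, sub_dotProduct, sub_dotProduct, hquad, hcross,
    dotProduct_mulVec_comm_of_transpose_eq hAt (nystromProj A E W *ᵥ u) y, hcross]
  ring

end Nystrom

section SmallestPositiveEigenvalue

variable {n : ℕ} {B : Matrix (Fin n) (Fin n) ℝ}

theorem mem_spectrum_of_mulVec_eq_smul {μ : ℝ} {v : Fin n → ℝ} (hv : v ≠ 0)
    (hBv : B *ᵥ v = μ • v) : μ ∈ spectrum ℝ B := by
  rw [← spectrum_toLin', ← Module.End.hasEigenvalue_iff_mem_spectrum]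
  exact Module.End.hasEigenvalue_of_hasEigenvector ⟨Module.End.mem_eigenspace_iff.mpr hBv, hv⟩

theorem exists_mulVec_eq_smul_of_mem_spectrum {μ : ℝ} (hμ : μ ∈ spectrum ℝ B) :
    ∃ v : Fin n → ℝ, v ≠ 0 ∧ B *ᵥ v = μ • v := by
  rw [← spectrum_toLin', ← Module.End.hasEigenvalue_iff_mem_spectrum] at hμ
  obtain ⟨v, hv⟩ := hμ.exists_hasEigenvector
  exact ⟨v, hv.2, hv.apply_eq_smul⟩

theorem lamMinPos_le_of_mem_spectrum (hB : B.PosSemidef) {μ : ℝ} (hμ : μ ∈ spectrum ℝ B)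
    (hμ0 : μ ≠ 0) : lamMinPos B ≤ μ := by
  refine csInf_le ⟨0, ?_⟩ ⟨hμ0, exists_mulVec_eq_smul_of_mem_spectrum hμ⟩
  rintro ν ⟨-, v, hv, hBv⟩
  exact (posSemidef_iff_isHermitian_and_spectrum_nonneg.mp hB).2
    (mem_spectrum_of_mulVec_eq_smul hv hBv)

open scoped MatrixOrder in
theorem Matrix.PosSemidef.lamMinPos_smul_le_mul_self (hB : B.PosSemidef) :
    (B * B - lamMinPos B • B).PosSemidef := by
  rw [← nonneg_iff_posSemidef]
  have hsa : IsSelfAdjoint B := hB.1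
  have h : B * B - lamMinPos B • B = cfc (fun x => x * x - lamMinPos B * x) B := by
    rw [cfc_sub _ _ B, cfc_mul _ _ B, cfc_const_mul _ _ B, cfc_id' ℝ B]
  rw [h]
  refine cfc_nonneg fun x hx => ?_
  have hx0 : 0 ≤ x := (posSemidef_iff_isHermitian_and_spectrum_nonneg.mp hB).2 hx
  rcases eq_or_ne x 0 with rfl | hne
  · simp
  · nlinarith [lamMinPos_le_of_mem_spectrum hB hx hne]

theorem Matrix.PosSemidef.lamMinPos_mul_dotProduct_le (hB : B.PosSemidef) (v : Fin n → ℝ) :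
    lamMinPos B * (v ⬝ᵥ (B *ᵥ v)) ≤ (B *ᵥ v) ⬝ᵥ (B *ᵥ v) := by
  have h := hB.lamMinPos_smul_le_mul_self.dotProduct_mulVec_nonneg' v
  rw [sub_mulVec, ← mulVec_mulVec, smul_mulVec, dotProduct_sub, dotProduct_smul, smul_eq_mul,
    dotProduct_mulVec_comm_of_transpose_eq hB.transpose_eq v] at h
  linarith

/-- `D^{†/2} M D^{†/2}` with `D = diag(M)`. -/
noncomputable def jacobiScaled {m : Type*} [Fintype m] [DecidableEq m] (M : Matrix m m ℝ) :
    Matrix m m ℝ :=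
  diagonal (fun j => (√(M j j))⁻¹) * M * diagonal (fun j => (√(M j j))⁻¹)

/-- A term with `M j j = 0` is `0` (division by zero), consistently with `M` vanishing on the
row and column of such a coordinate. -/
theorem Matrix.PosSemidef.lamMinPos_jacobiScaled_mul_le {M : Matrix (Fin n) (Fin n) ℝ}
    (hM : M.PosSemidef) (y : Fin n → ℝ) :
    lamMinPos (jacobiScaled M) * (y ⬝ᵥ (M *ᵥ y)) ≤ ∑ j, (M *ᵥ y) j ^ 2 / M j j := by
  set Dhi : Matrix (Fin n) (Fin n) ℝ := diagonal fun j => (√(M j j))⁻¹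
  set Dh : Matrix (Fin n) (Fin n) ℝ := diagonal fun j => √(M j j)
  have hrow : ∀ i j, √(M i i) * ((√(M i i))⁻¹ * M i j) = M i j := by
    intro i j
    rcases eq_or_ne (M i i) 0 with h | h
    · simp [hM.apply_eq_zero_of_diag_eq_zero h j]
    · rw [← mul_assoc, mul_inv_cancel₀ (Real.sqrt_ne_zero'.mpr (hM.diag_nonneg.lt_of_ne' h)),
        one_mul]
  have hcol : ∀ i j, M i j * ((√(M j j))⁻¹ * √(M j j)) = M i j := by
    intro i j
    have hji : M j i = M i j := by simpa using hM.1.apply i j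
    rw [← hji]
    linear_combination hrow j i
  have hB : (Dhi * M * Dhi).PosSemidef := by
    simpa [Dhi] using hM.transpose_mul_mul Dhi
  have hBDh : (Dhi * M * Dhi) *ᵥ (Dh *ᵥ y) = Dhi *ᵥ (M *ᵥ y) := by
    rw [mulVec_mulVec, mulVec_mulVec]
    congr 1
    ext i j
    simp only [Dhi, Dh, mul_diagonal, diagonal_mul, mul_assoc, hcol]
  have hquad : (Dh *ᵥ y) ⬝ᵥ (Dhi *ᵥ (M *ᵥ y)) = y ⬝ᵥ (M *ᵥ y) := by
    rw [dotProduct_comm, ← dotProduct_transpose_mulVec, diagonal_transpose, mulVec_mulVec,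
      mulVec_mulVec]
    congr 2
    ext i j
    simp only [Dhi, diagonal_mul, mul_assoc, hrow]
  have h := hB.lamMinPos_mul_dotProduct_le (Dh *ᵥ y)
  rw [hBDh, hquad] at h
  change lamMinPos (Dhi * M * Dhi) * _ ≤ _
  refine h.trans_eq (Finset.sum_congr rfl fun j _ => ?_)
  have hinv : (√(M j j))⁻¹ * (√(M j j))⁻¹ = (M j j)⁻¹ := by
    rw [← mul_inv, Real.mul_self_sqrt hM.diag_nonneg]
  simp only [Dhi, mulVec_diagonal]
  rw [div_eq_mul_inv, ← hinv]
  ring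

end SmallestPositiveEigenvalue

section Steps

variable {m s : Type*} [Fintype m] [Fintype s] [DecidableEq m]

/-- One SC-RCD update with the single coordinate `j`, written on the error `y = x - x*`. -/
noncomputable def scCoordStep (A : Matrix m m ℝ) (E : Matrix m s ℝ) (W : Matrix s s ℝ) (j : m)
    (y : m → ℝ) : m → ℝ :=
  y - nystromProj A E W *ᵥ (((A *ᵥ y) j / nystromResidual A E W j j) • Pi.single j 1)

/-- One SC-RCD update with the block whose coordinate selector is `F` and with
`P = (A°_{J,J})†`, written on the error `y = x - x*`. -/
def scBlockStep {k : Type*} [Fintype k] (A : Matrix m m ℝ) (E : Matrix m s ℝ)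
    (W : Matrix s s ℝ) (F : Matrix m k ℝ) (P : Matrix k k ℝ) (y : m → ℝ) : m → ℝ :=
  y - nystromProj A E W *ᵥ (F *ᵥ (P *ᵥ (Fᵀ *ᵥ (A *ᵥ y))))

variable {A : Matrix m m ℝ} {E : Matrix m s ℝ} {W : Matrix s s ℝ} {k : Type*} [Fintype k]
  {F : Matrix m k ℝ}

theorem exists_traj_scCoordStep_eq (y : m → ℝ) :
    ∀ {K : ℕ} (ω : Fin K → m), (∀ i, ∃ γ, F *ᵥ γ = Pi.single (ω i) 1) →
      ∃ γ, traj (scCoordStep A E W) y K ω = y - nystromProj A E W *ᵥ (F *ᵥ γ)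
  | 0, _, _ => ⟨0, by simp [traj]⟩
  | K + 1, ω, hω => by
    obtain ⟨γ, hγ⟩ := exists_traj_scCoordStep_eq y (Fin.init ω) fun i => hω i.castSucc
    obtain ⟨δ, hδ⟩ := hω (Fin.last K)
    refine ⟨γ + ((A *ᵥ traj (scCoordStep A E W) y K (Fin.init ω)) (ω (Fin.last K)) /
      nystromResidual A E W (ω (Fin.last K)) (ω (Fin.last K))) • δ, ?_⟩
    rw [traj, scCoordStep, ← hδ, ← mulVec_smul, hγ, mulVec_add, mulVec_add, sub_sub]

variable (hA : A.PosSemidef) (hW : IsMoorePenrose (Eᵀ * A * E) W)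
include hA hW

theorem energy_scCoordStep {y : m → ℝ} (hy : Eᵀ *ᵥ (A *ᵥ y) = 0) (j : m) :
    scCoordStep A E W j y ⬝ᵥ (A *ᵥ scCoordStep A E W j y) =
      y ⬝ᵥ (A *ᵥ y) - (A *ᵥ y) j ^ 2 / nystromResidual A E W j j := by
  rw [scCoordStep, energy_sub_nystromProj hA hW hy]
  simp only [mulVec_smul, mulVec_single_one, smul_dotProduct, dotProduct_smul,
    single_one_dotProduct, col_apply, smul_eq_mul]
  rcases eq_or_ne (nystromResidual A E W j j) 0 with h | h
  · simp [h]
  · field_simp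
    ring

theorem energy_scBlockStep_le {P : Matrix k k ℝ}
    (hP : IsMoorePenrose (Fᵀ * nystromResidual A E W * F) P) {y : m → ℝ}
    (hy : Eᵀ *ᵥ (A *ᵥ y) = 0) (γ : k → ℝ) :
    scBlockStep A E W F P y ⬝ᵥ (A *ᵥ scBlockStep A E W F P y) ≤
      (y - nystromProj A E W *ᵥ (F *ᵥ γ)) ⬝ᵥ (A *ᵥ (y - nystromProj A E W *ᵥ (F *ᵥ γ))) := by
  have hAo := nystromResidual_posSemidef hA hW
  have hexpand : ∀ δ, (y - nystromProj A E W *ᵥ (F *ᵥ δ)) ⬝ᵥ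
      (A *ᵥ (y - nystromProj A E W *ᵥ (F *ᵥ δ))) = y ⬝ᵥ (A *ᵥ y) +
        (δ ⬝ᵥ ((Fᵀ * nystromResidual A E W * F) *ᵥ δ) - 2 * (δ ⬝ᵥ (Fᵀ *ᵥ (A *ᵥ y)))) := by
    intro δ
    have hlin : δ ⬝ᵥ (Fᵀ *ᵥ (A *ᵥ y)) = (F *ᵥ δ) ⬝ᵥ (A *ᵥ y) := by
      rw [dotProduct_transpose_mulVec, dotProduct_comm]
    have hquad : δ ⬝ᵥ ((Fᵀ * nystromResidual A E W * F) *ᵥ δ) =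
        (F *ᵥ δ) ⬝ᵥ (nystromResidual A E W *ᵥ (F *ᵥ δ)) := by
      rw [← mulVec_mulVec, ← mulVec_mulVec, dotProduct_transpose_mulVec, dotProduct_comm]
    rw [energy_sub_nystromProj hA hW hy, hlin, hquad]
    ring
  have hr : (Fᵀ * nystromResidual A E W * F) *ᵥ (P *ᵥ (Fᵀ *ᵥ (A *ᵥ y))) = Fᵀ *ᵥ (A *ᵥ y) := by
    have h := hAo.mul_pinv_mul_eq Fᵀ (P := P) (by rwa [transpose_transpose])
    rw [transpose_transpose] at h
    rw [← nystromResidual_mulVec_of_transpose_mulVec_eq_zero (W := W) hy]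
    simp only [mulVec_mulVec]
    conv_rhs => rw [← h]
    simp only [Matrix.mul_assoc]
  rw [scBlockStep, hexpand, hexpand]
  linarith [(hAo.transpose_mul_mul F).quadratic_le_of_mulVec_eq hr γ]

end Steps

section UniformSampling

variable {n : ℕ} {s : Type*} [Fintype s] {A : Matrix (Fin n) (Fin n) ℝ}
  {E : Matrix (Fin n) s ℝ} {W : Matrix s s ℝ} {N : ℝ} {p : Fin n → ℝ}
  (hN : ((Finset.univ.filter fun j => 0 < nystromResidual A E W j j).card : ℝ) = N)
  (hp : ∀ j, p j = if 0 < nystromResidual A E W j j then N⁻¹ else 0)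
include hN hp

theorem uniform_weight_nonneg (j : Fin n) : 0 ≤ p j := by
  rw [hp j]
  split_ifs
  exacts [inv_nonneg.mpr (hN ▸ Nat.cast_nonneg _), le_rfl]

variable (hA : A.PosSemidef) (hW : IsMoorePenrose (Eᵀ * A * E) W)
include hA hW

theorem sum_mul_energy_scCoordStep_le {y : Fin n → ℝ} (hy : Eᵀ *ᵥ (A *ᵥ y) = 0) :
    ∑ j, p j * (scCoordStep A E W j y ⬝ᵥ (A *ᵥ scCoordStep A E W j y)) ≤
      (1 - lamMinPos (jacobiScaled (nystromResidual A E W)) / N) * (y ⬝ᵥ (A *ᵥ y)) := by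
  have hterm : ∀ j, p j * (scCoordStep A E W j y ⬝ᵥ (A *ᵥ scCoordStep A E W j y)) =
      N⁻¹ * (if 0 < nystromResidual A E W j j then y ⬝ᵥ (A *ᵥ y) else 0) -
        N⁻¹ * ((A *ᵥ y) j ^ 2 / nystromResidual A E W j j) := by
    intro j
    rw [hp j, energy_scCoordStep hA hW hy]
    split_ifs with h
    · ring
    · simp [le_antisymm (not_lt.mp h) (nystromResidual_posSemidef hA hW).diag_nonneg]
  have hspec := (nystromResidual_posSemidef hA hW).lamMinPos_jacobiScaled_mul_le y
  rw [nystromResidual_mulVec_of_transpose_mulVec_eq_zero hy] at hspec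
  simp only [hterm, Finset.sum_sub_distrib, ← Finset.mul_sum, Finset.sum_ite,
    Finset.sum_const_zero, add_zero, Finset.sum_const, nsmul_eq_mul, hN]
  have hQ := hA.dotProduct_mulVec_nonneg' y
  rcases eq_or_ne N 0 with rfl | hN0
  · simpa using hQ
  · have hT := mul_le_mul_of_nonneg_left hspec (inv_nonneg.mpr (hN ▸ Nat.cast_nonneg _))
    rw [inv_mul_cancel_left₀ hN0]
    linarith [show (1 - lamMinPos (jacobiScaled (nystromResidual A E W)) / N) * (y ⬝ᵥ (A *ᵥ y)) =
      y ⬝ᵥ (A *ᵥ y) - N⁻¹ * (lamMinPos (jacobiScaled (nystromResidual A E W)) * (y ⬝ᵥ (A *ᵥ y)))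
      by ring]

/-- Tested on the error `-nystromProj A E W e_j` of a coordinate with `A°_{jj} > 0`, whose
energy is `A°_{jj}`, the expected-decrease bound forces the rate to be nonnegative. -/
theorem one_sub_lamMinPos_div_nonneg :
    0 ≤ 1 - lamMinPos (jacobiScaled (nystromResidual A E W)) / N := by
  rcases eq_or_ne N 0 with rfl | hN0
  · simp
  obtain ⟨j, hj⟩ : (Finset.univ.filter fun j => 0 < nystromResidual A E W j j).Nonempty := by
    rw [← Finset.card_pos, ← Nat.cast_pos (α := ℝ), hN]
    exact (Nat.cast_nonneg _ |>.trans_eq hN).lt_of_ne' hN0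
  have h0 : Eᵀ *ᵥ (A *ᵥ 0) = 0 := by simp
  have hQ : (0 - nystromProj A E W *ᵥ Pi.single j 1) ⬝ᵥ
      (A *ᵥ (0 - nystromProj A E W *ᵥ Pi.single j 1)) = nystromResidual A E W j j := by
    rw [energy_sub_nystromProj hA hW h0]
    simp
  have hsum := sum_mul_energy_scCoordStep_le hN hp hA hW
    (transpose_mulVec_mulVec_sub_nystromProj hA hW h0 (Pi.single j 1))
  rw [hQ] at hsum
  refine nonneg_of_mul_nonneg_left (le_trans ?_ hsum) (Finset.mem_filter.mp hj).2
  exact Finset.sum_nonneg fun i _ =>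
    mul_nonneg (uniform_weight_nonneg hN hp i) (hA.dotProduct_mulVec_nonneg' _)

/-- A block update does at least as well as running the single-coordinate updates of its
coordinates one after the other, since both move within the same affine space and the block
update minimizes the energy there. -/
theorem sum_prod_mul_energy_scBlockStep_le {l : ℕ} {k : Type*} [Fintype k]
    {F : (Fin l → Fin n) → Matrix (Fin n) k ℝ} {P : (Fin l → Fin n) → Matrix k k ℝ}
    (hP : ∀ J, IsMoorePenrose ((F J)ᵀ * nystromResidual A E W * F J) (P J))
    (hF : ∀ J t, ∃ γ, F J *ᵥ γ = Pi.single (J t) 1) {y : Fin n → ℝ}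
    (hy : Eᵀ *ᵥ (A *ᵥ y) = 0) :
    ∑ J : Fin l → Fin n, (∏ t, p (J t)) *
        (scBlockStep A E W (F J) (P J) y ⬝ᵥ (A *ᵥ scBlockStep A E W (F J) (P J) y)) ≤
      (1 - lamMinPos (jacobiScaled (nystromResidual A E W)) / N) ^ l * (y ⬝ᵥ (A *ᵥ y)) := by
  calc _ ≤ ∑ J : Fin l → Fin n, (∏ t, p (J t)) *
        (traj (scCoordStep A E W) y l J ⬝ᵥ (A *ᵥ traj (scCoordStep A E W) y l J)) := by
        gcongr with J
        · exact Finset.prod_nonneg fun t _ => uniform_weight_nonneg hN hp (J t)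
        · obtain ⟨γ, hγ⟩ := exists_traj_scCoordStep_eq (A := A) (E := E) (W := W) y J (hF J)
          rw [hγ]
          exact energy_scBlockStep_le hA hW (hP J) hy γ
    _ ≤ _ := sum_prod_mul_traj_le_s13 (I := Fin n) (Φ := fun v => v ⬝ᵥ (A *ᵥ v))
        (Q := fun v => Eᵀ *ᵥ (A *ᵥ v) = 0) (uniform_weight_nonneg hN hp)
        (one_sub_lamMinPos_div_nonneg hN hp hA hW)
        (fun _ _ hv => transpose_mulVec_mulVec_sub_nystromProj hA hW hv _)
        (fun _ hv => sum_mul_energy_scCoordStep_le hN hp hA hW hv) hy l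

theorem sum_prod_mul_energy_traj_le {l : ℕ} {k : Type*} [Fintype k]
    {F : (Fin l → Fin n) → Matrix (Fin n) k ℝ} {P : (Fin l → Fin n) → Matrix k k ℝ}
    (hP : ∀ J, IsMoorePenrose ((F J)ᵀ * nystromResidual A E W * F J) (P J))
    (hF : ∀ J t, ∃ γ, F J *ᵥ γ = Pi.single (J t) 1)
    {step : (Fin l → Fin n) → (Fin n → ℝ) → Fin n → ℝ} {xstar : Fin n → ℝ}
    (hstep : ∀ J x, step J x - xstar = scBlockStep A E W (F J) (P J) (x - xstar))
    {x0 : Fin n → ℝ} (hx0 : Eᵀ *ᵥ (A *ᵥ (x0 - xstar)) = 0) (K : ℕ) :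
    ∑ ω : Fin K → (Fin l → Fin n), (∏ i, ∏ t, p (ω i t)) *
        ((traj step x0 K ω - xstar) ⬝ᵥ (A *ᵥ (traj step x0 K ω - xstar))) ≤
      (1 - lamMinPos (jacobiScaled (nystromResidual A E W)) / N) ^ (K * l) *
        ((x0 - xstar) ⬝ᵥ (A *ᵥ (x0 - xstar))) := by
  rw [mul_comm K l, pow_mul]
  exact sum_prod_mul_traj_le_s13 (I := Fin l → Fin n) (w := fun J => ∏ t, p (J t))
    (Φ := fun x => (x - xstar) ⬝ᵥ (A *ᵥ (x - xstar)))
    (Q := fun x => Eᵀ *ᵥ (A *ᵥ (x - xstar)) = 0)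
    (fun J => Finset.prod_nonneg fun t _ => uniform_weight_nonneg hN hp (J t))
    (pow_nonneg (one_sub_lamMinPos_div_nonneg hN hp hA hW) l)
    (fun J x hx => by
      simp only [hstep]
      exact transpose_mulVec_mulVec_sub_nystromProj hA hW hx _)
    (fun x hx => by
      simpa only [hstep] using sum_prod_mul_energy_scBlockStep_le hN hp hA hW hP hF hx)
    hx0 K

end UniformSampling

section Selector

variable {l m ι : Type*} [DecidableEq m] (f : ι → m)

theorem mul_of_ite_eq [Fintype m] (M : Matrix l m ℝ) :
    M * of (fun i j => if i = f j then (1 : ℝ) else 0) = M.submatrix id f := by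
  ext i j
  simp [mul_apply]

theorem transpose_of_ite_eq_mul [Fintype m] (M : Matrix m l ℝ) :
    (of fun i j => if i = f j then (1 : ℝ) else 0)ᵀ * M = M.submatrix f id := by
  ext i j
  simp [mul_apply]

theorem transpose_of_ite_eq_mulVec [Fintype m] (v : m → ℝ) :
    (of fun i j => if i = f j then (1 : ℝ) else 0)ᵀ *ᵥ v = fun t => v (f t) := by
  ext t
  simp [mulVec, dotProduct]

theorem of_ite_eq_mulVec_single [Fintype ι] [DecidableEq ι] (t : ι) :
    (of fun i j => if i = f j then (1 : ℝ) else 0) *ᵥ Pi.single t 1 = Pi.single (f t) 1 := by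
  ext i
  simp [Pi.single_apply]

theorem sub_add_sub_eq_scBlockStep [Fintype m] {s k : Type*} [Fintype s] [Fintype k]
    {A : Matrix m m ℝ} {E : Matrix m s ℝ} {W : Matrix s s ℝ} {P : Matrix k k ℝ} (g : k → m)
    {b xstar : m → ℝ} (hxstar : A *ᵥ xstar = b) (x : m → ℝ) :
    x - of (fun i t => if i = g t then (1 : ℝ) else 0) *ᵥ (P *ᵥ fun t => (A *ᵥ x - b) (g t)) +
        E *ᵥ ((W * (Eᵀ * A)).submatrix id g *ᵥ (P *ᵥ fun t => (A *ᵥ x - b) (g t))) - xstar =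
      scBlockStep A E W (of fun i t => if i = g t then (1 : ℝ) else 0) P (x - xstar) := by
  rw [scBlockStep, nystromProj, ← transpose_of_ite_eq_mulVec g, ← hxstar, ← mulVec_sub,
    ← mul_of_ite_eq g]
  simp only [sub_mulVec, one_mulVec, ← mulVec_mulVec]
  abel

end Selector

theorem cast_card_filter_eq_sub_card {n : ℕ} {q : Fin n → Prop} [DecidablePred q]
    (S : Finset (Fin n)) (hq : ∀ j, q j ↔ j ∉ S) :
    ((Finset.univ.filter q).card : ℝ) = n - S.card := by
  rw [Finset.filter_congr fun j _ => hq j, Finset.filter_not, Finset.filter_mem_eq_inter,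
    Finset.univ_inter, ← Finset.compl_eq_univ_sdiff, Finset.card_compl, Fintype.card_fin,
    Nat.cast_sub (S.card_le_univ.trans_eq (Fintype.card_fin n))]

theorem stmt_13_general {n l d : ℕ}
    (A : Matrix (Fin n) (Fin n) ℝ) (hA : A.PosSemidef)
    (b : Fin n → ℝ)
    (xstar : Fin n → ℝ) (hxstar : A *ᵥ xstar = b)
    (S : Finset (Fin n)) (hcard : S.card = d)
    -- `W = (A_{S,S})†`
    (W : Matrix {j // j ∈ S} {j // j ∈ S} ℝ)
    (hW : IsMoorePenrose (A.submatrix (fun j : {j // j ∈ S} => (j : Fin n))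
      (fun j : {j // j ∈ S} => (j : Fin n))) W)
    -- the Nyström residual `A° = A − A_{:,S}(A_{S,S})†A_{S,:}`
    (Ao : Matrix (Fin n) (Fin n) ℝ)
    (hAo : Ao = A - A.submatrix id (fun j : {j // j ∈ S} => (j : Fin n)) * W *
      A.submatrix (fun j : {j // j ∈ S} => (j : Fin n)) id)
    -- `A°_{j,j} > 0` for exactly the `n − d` coordinates `j ∉ S`
    (hdiag : ∀ j : Fin n, 0 < Ao j j ↔ j ∉ S)
    -- `D = diag(A°)` and its pseudoinverse square root `D^{†/2}`
    (Dhi : Matrix (Fin n) (Fin n) ℝ)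
    (hDhi : Dhi = Matrix.diagonal fun j => (Real.sqrt (Ao j j))⁻¹)
    -- the auxiliary matrix `C = (A_{S,S})† A_{S,:}`
    (C : Matrix {j // j ∈ S} (Fin n) ℝ)
    (hC : C = W * A.submatrix (fun j : {j // j ∈ S} => (j : Fin n)) id)
    -- `pJ J = (A°_{J,J})†` for a block `J` of `ℓ` coordinates
    (pJ : (Fin l → Fin n) → Matrix (Fin l) (Fin l) ℝ)
    (hpJ : ∀ J : Fin l → Fin n, IsMoorePenrose (Ao.submatrix J J) (pJ J))
    -- coordinate selection matrices `e_S` and `e_J`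
    (eS : Matrix (Fin n) {j // j ∈ S} ℝ)
    (heS : eS = Matrix.of fun i j => if i = j.val then 1 else 0)
    (eJ : (Fin l → Fin n) → Matrix (Fin n) (Fin l) ℝ)
    (heJ : ∀ J, eJ J = Matrix.of fun i t => if i = J t then 1 else 0)
    -- the SC-RCD update: `x^{k+1} = x^k − e_J α + e_S β` with `α = (A°_{J,J})† r_J`,
    -- `β = C_{:,J} α`, and `r = A x^k − b`
    (step : (Fin l → Fin n) → (Fin n → ℝ) → (Fin n → ℝ))
    (hstep : ∀ (J : Fin l → Fin n) (x : Fin n → ℝ),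
      step J x = x - eJ J *ᵥ (pJ J *ᵥ fun t => (A *ᵥ x - b) (J t))
        + eS *ᵥ (C.submatrix id J *ᵥ (pJ J *ᵥ fun t => (A *ᵥ x - b) (J t))))
    -- `x0` solves the subsystem `A_{S,:} x = b_S`
    (x0 : Fin n → ℝ)
    (hx0 : A.submatrix (fun j : {j // j ∈ S} => (j : Fin n)) id *ᵥ x0 =
      fun j : {j // j ∈ S} => b j)
    -- uniform sampling probabilities on `{j : A°_{j,j} > 0}`
    (p : Fin n → ℝ)
    (hp : ∀ j, p j = if 0 < Ao j j then ((n : ℝ) - d)⁻¹ else 0) :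
    ∀ k : ℕ,
      ∑ ω : Fin k → (Fin l → Fin n), (∏ i, ∏ t, p (ω i t)) *
          ((traj step x0 k ω - xstar) ⬝ᵥ (A *ᵥ (traj step x0 k ω - xstar))) ≤
        (1 - lamMinPos (Dhi * Ao * Dhi) / ((n : ℝ) - d)) ^ (k * l) *
          ((x0 - xstar) ⬝ᵥ (A *ᵥ (x0 - xstar))) := by
  have hAS : eSᵀ * A = A.submatrix (fun j : {j // j ∈ S} => (j : Fin n)) id := by
    rw [heS, transpose_of_ite_eq_mul]
  have hW' : IsMoorePenrose (eSᵀ * A * eS) W := by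
    rwa [hAS, heS, mul_of_ite_eq, submatrix_submatrix]
  obtain rfl : Ao = nystromResidual A eS W := by
    rw [hAo, nystromResidual, hAS, heS, mul_of_ite_eq]
  obtain rfl : C = W * (eSᵀ * A) := by rw [hC, hAS]
  have hDhi' : Dhi * nystromResidual A eS W * Dhi = jacobiScaled (nystromResidual A eS W) := by
    rw [hDhi, jacobiScaled]
  have hN := hcard ▸ cast_card_filter_eq_sub_card S hdiag
  have hstep' : ∀ J x, step J x - xstar = scBlockStep A eS W (eJ J) (pJ J) (x - xstar) :=
    fun J x => by rw [hstep, heJ]; exact sub_add_sub_eq_scBlockStep J hxstar x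
  have hx0' : eSᵀ *ᵥ (A *ᵥ (x0 - xstar)) = 0 := by
    rw [mulVec_sub, mulVec_sub, mulVec_mulVec, hAS, hx0, hxstar, heS, transpose_of_ite_eq_mulVec,
      sub_self]
  have hP : ∀ J, IsMoorePenrose ((eJ J)ᵀ * nystromResidual A eS W * eJ J) (pJ J) :=
    fun J => by rw [heJ, transpose_of_ite_eq_mul, mul_of_ite_eq, submatrix_submatrix]; exact hpJ J
  have hF : ∀ J t, ∃ γ, eJ J *ᵥ γ = Pi.single (J t) 1 :=
    fun J t => ⟨Pi.single t 1, by rw [heJ, of_ite_eq_mulVec_single]⟩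
  rw [hDhi']
  exact sum_prod_mul_energy_traj_le hN hp hA hW' hP hF hstep' hx0'

/-- SC-RCD convergence, uniform sampling. With `|S| = d`, diagonal
entries of the Nyström residual `A°` positive exactly off `S`, `D = diag(A°)`, and
blocks of `ℓ` coordinates sampled i.i.d. uniformly from `{j : A°_{j,j} > 0}`, the
SC-RCD iterates satisfy
`E‖x^k − x*‖_A² ≤ (1 − λmin⁺(D^{†/2} A° D^{†/2})/(n − d))^{kℓ} ‖x^0 − x*‖_A²`. -/
theorem stmt_13 {n l d : ℕ}
    (A : Matrix (Fin n) (Fin n) ℝ) (hA : A.PosSemidef)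
    (b : Fin n → ℝ) (hconsistent : ∃ x, A *ᵥ x = b)
    (xstar : Fin n → ℝ) (hxstar : A *ᵥ xstar = b)
    (S : Finset (Fin n)) (hcard : S.card = d)
    -- `W = (A_{S,S})†`
    (W : Matrix {j // j ∈ S} {j // j ∈ S} ℝ)
    (hW : IsMoorePenrose (A.submatrix (fun j : {j // j ∈ S} => (j : Fin n))
      (fun j : {j // j ∈ S} => (j : Fin n))) W)
    -- the Nyström residual `A° = A − A_{:,S}(A_{S,S})†A_{S,:}`
    (Ao : Matrix (Fin n) (Fin n) ℝ)
    (hAo : Ao = A - A.submatrix id (fun j : {j // j ∈ S} => (j : Fin n)) * W *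
      A.submatrix (fun j : {j // j ∈ S} => (j : Fin n)) id)
    -- `A°_{j,j} > 0` for exactly the `n − d` coordinates `j ∉ S`
    (hdiag : ∀ j : Fin n, 0 < Ao j j ↔ j ∉ S)
    -- `D = diag(A°)` and its pseudoinverse square root `D^{†/2}`
    (D : Matrix (Fin n) (Fin n) ℝ) (hD : D = Matrix.diagonal fun j => Ao j j)
    (Dhi : Matrix (Fin n) (Fin n) ℝ)
    (hDhi : Dhi = Matrix.diagonal fun j => (Real.sqrt (Ao j j))⁻¹)
    -- the auxiliary matrix `C = (A_{S,S})† A_{S,:}`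
    (C : Matrix {j // j ∈ S} (Fin n) ℝ)
    (hC : C = W * A.submatrix (fun j : {j // j ∈ S} => (j : Fin n)) id)
    -- `pJ J = (A°_{J,J})†` for a block `J` of `ℓ` coordinates
    (pJ : (Fin l → Fin n) → Matrix (Fin l) (Fin l) ℝ)
    (hpJ : ∀ J : Fin l → Fin n, IsMoorePenrose (Ao.submatrix J J) (pJ J))
    -- coordinate selection matrices `e_S` and `e_J`
    (eS : Matrix (Fin n) {j // j ∈ S} ℝ)
    (heS : eS = Matrix.of fun i j => if i = j.val then 1 else 0)
    (eJ : (Fin l → Fin n) → Matrix (Fin n) (Fin l) ℝ)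
    (heJ : ∀ J, eJ J = Matrix.of fun i t => if i = J t then 1 else 0)
    -- the SC-RCD update: `x^{k+1} = x^k − e_J α + e_S β` with `α = (A°_{J,J})† r_J`,
    -- `β = C_{:,J} α`, and `r = A x^k − b`
    (step : (Fin l → Fin n) → (Fin n → ℝ) → (Fin n → ℝ))
    (hstep : ∀ (J : Fin l → Fin n) (x : Fin n → ℝ),
      step J x = x - eJ J *ᵥ (pJ J *ᵥ fun t => (A *ᵥ x - b) (J t))
        + eS *ᵥ (C.submatrix id J *ᵥ (pJ J *ᵥ fun t => (A *ᵥ x - b) (J t))))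
    -- `x0` solves the subsystem `A_{S,:} x = b_S`
    (x0 : Fin n → ℝ)
    (hx0 : A.submatrix (fun j : {j // j ∈ S} => (j : Fin n)) id *ᵥ x0 =
      fun j : {j // j ∈ S} => b j)
    -- uniform sampling probabilities on `{j : A°_{j,j} > 0}`
    (p : Fin n → ℝ)
    (hp : ∀ j, p j = if 0 < Ao j j then ((n : ℝ) - d)⁻¹ else 0) :
    ∀ k : ℕ,
      ∑ ω : Fin k → (Fin l → Fin n), (∏ i, ∏ t, p (ω i t)) *
          ((traj step x0 k ω - xstar) ⬝ᵥ (A *ᵥ (traj step x0 k ω - xstar))) ≤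
        (1 - lamMinPos (Dhi * Ao * Dhi) / ((n : ℝ) - d)) ^ (k * l) *
          ((x0 - xstar) ⬝ᵥ (A *ᵥ (x0 - xstar))) :=
  stmt_13_general A hA b xstar hxstar S hcard W hW Ao hAo hdiag Dhi hDhi C hC pJ hpJ eS heS eJ heJ
    step hstep x0 hx0 p hp
end

section
/- Let A ∈ ℝ^{n×n} be symmetric positive semidefinite and S ⊆ [n], and let A° := A − A_{:,S}(A_{S,S})† A_{S,:} be the Nyström residual. Then the smallest nonzero eigenvalue of A° is at least the smallest nonzero eigenvalue of A: λmin⁺(A°) ≥ λmin⁺(A). -/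
/-! Write `A° = A - (A E) W (Eᵀ A)` with `E` the column selector of `S`. Since `W` is an outer
inverse of `Eᵀ A E`, every inner inverse `G` of `A` (`A G A = A`) is one of `A°` as well. Take
`G = A⁺ ⪰ 0`; minimality of `λ = λmin⁺(A)` gives `λ G ⪯ 1`. If `A° v = μ v` with `μ ≠ 0`, then
`A° G v = v`, and as `A°` is symmetric (`W` is, by uniqueness of the Moore–Penrose inverse),
`‖v‖² = μ vᵀGv`. Together with `λ vᵀGv ≤ ‖v‖²` and `vᵀGv > 0` this gives `λ ≤ μ`. -/

open Matrix

/-- `μ` is an eigenvalue of the square matrix `M`. -/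
def IsEigenvalue {n : ℕ} (M : Matrix (Fin n) (Fin n) ℝ) (μ : ℝ) : Prop :=
  ∃ v : Fin n → ℝ, v ≠ 0 ∧ M *ᵥ v = μ • v

open scoped MatrixOrder

namespace IsMoorePenrose

variable {k l : Type*} [Fintype k] [Fintype l] {M : Matrix k l ℝ} {P Q : Matrix l k ℝ}

theorem unique_s15 (hP : IsMoorePenrose M P) (hQ : IsMoorePenrose M Q) : P = Q := by
  obtain ⟨hP1, hP2, hP3, hP4⟩ := hP
  obtain ⟨hQ1, hQ2, hQ3, hQ4⟩ := hQ
  have hMP : M * P = M * Q :=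
    calc M * P = ((M * Q) * (M * P))ᵀ := by rw [← Matrix.mul_assoc, hQ1, hP3]
      _ = M * P * M * Q := by rw [transpose_mul, hP3, hQ3]; simp only [Matrix.mul_assoc]
      _ = M * Q := by rw [hP1]
  have hPM : P * M = Q * M :=
    calc P * M = ((P * M) * (Q * M))ᵀ := by rw [Matrix.mul_assoc, ← Matrix.mul_assoc M, hQ1, hP4]
      _ = Q * (M * P * M) := by rw [transpose_mul, hP4, hQ4]; simp only [Matrix.mul_assoc]
      _ = Q * M := by rw [hP1]
  calc P = P * M * P := hP2.symm
    _ = Q * M * Q := by rw [hPM, Matrix.mul_assoc, hMP, ← Matrix.mul_assoc]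
    _ = Q := hQ2

theorem transpose (h : IsMoorePenrose M P) : IsMoorePenrose Mᵀ Pᵀ := by
  obtain ⟨h1, h2, h3, h4⟩ := h
  refine ⟨?_, ?_, ?_, ?_⟩
  · rw [← transpose_mul, ← transpose_mul, ← Matrix.mul_assoc, h1]
  · rw [← transpose_mul, ← transpose_mul, ← Matrix.mul_assoc, h2]
  · rw [← transpose_mul, transpose_transpose, h4]
  · rw [← transpose_mul, transpose_transpose, h3]

theorem transpose_eq_of_isSymm {M P : Matrix k k ℝ} (hM : M.IsSymm)
    (h : IsMoorePenrose M P) : Pᵀ = P :=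
  (h.unique_s15 (hM.eq ▸ h.transpose)).symm

end IsMoorePenrose

theorem Matrix.sub_mul_mul_sub_eq_self {R : Type*} [Ring R] {n s : Type*} [Fintype n] [Fintype s]
    {A G : Matrix n n R} {E : Matrix n s R} {F : Matrix s n R} {W : Matrix s s R}
    (hAGA : A * G * A = A) (hW : W * (F * A * E) * W = W) :
    (A - A * E * W * (F * A)) * G * (A - A * E * W * (F * A)) = A - A * E * W * (F * A) := by
  have hAGB : A * G * (A * E * W * (F * A)) = A * E * W * (F * A) := by
    simp only [← Matrix.mul_assoc, hAGA]
  have hBGA : A * E * W * (F * A) * G * A = A * E * W * (F * A) := by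
    simp only [Matrix.mul_assoc] at hAGA ⊢
    rw [hAGA]
  have hBGB : A * E * W * (F * A) * G * (A * E * W * (F * A)) = A * E * W * (F * A) := by
    calc _ = A * E * (W * (F * (A * G * A) * E) * W) * (F * A) := by simp only [Matrix.mul_assoc]
      _ = A * E * W * (F * A) := by rw [hAGA, hW]
  simp only [sub_mul, mul_sub]
  rw [hAGA, hAGB, hBGA, hBGB, sub_self, sub_zero]

theorem isEigenvalue_iff_mem_spectrum {n : ℕ} {M : Matrix (Fin n) (Fin n) ℝ} {μ : ℝ} :
    IsEigenvalue M μ ↔ μ ∈ spectrum ℝ M := by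
  rw [← Matrix.spectrum_toLin', ← Module.End.hasEigenvalue_iff_mem_spectrum]
  constructor
  · rintro ⟨v, hv, hMv⟩
    exact Module.End.hasEigenvalue_of_hasEigenvector ⟨Module.End.mem_eigenspace_iff.mpr hMv, hv⟩
  · intro h
    obtain ⟨v, hv⟩ := h.exists_hasEigenvector
    exact ⟨v, hv.2, Module.End.mem_eigenspace_iff.mp hv.1⟩

theorem IsEigenvalue.le_of_innerInverse {n : ℕ} {M G : Matrix (Fin n) (Fin n) ℝ} {lam μ : ℝ}
    (he : IsEigenvalue M μ) (hμ : μ ≠ 0) (hM : M.IsSymm) (hG : 0 ≤ G) (hMGM : M * G * M = M)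
    (hlamG : lam • G ≤ 1) : lam ≤ μ := by
  obtain ⟨v, hv, hMv⟩ := he
  have hMGv : M *ᵥ (G *ᵥ v) = v := by
    have h := congrArg (· *ᵥ v) hMGM
    simp only [← mulVec_mulVec, hMv, mulVec_smul] at h
    exact smul_right_injective _ hμ h
  have hvv : v ⬝ᵥ v = μ * (v ⬝ᵥ G *ᵥ v) := by
    calc v ⬝ᵥ v = v ⬝ᵥ M *ᵥ (G *ᵥ v) := by rw [hMGv]
      _ = (M *ᵥ v) ⬝ᵥ G *ᵥ v := by rw [dotProduct_mulVec, ← mulVec_transpose, hM.eq]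
      _ = μ * (v ⬝ᵥ G *ᵥ v) := by rw [hMv, smul_dotProduct, smul_eq_mul]
  have hvv_pos : 0 < v ⬝ᵥ v := dotProduct_self_star_pos_iff.mpr hv
  have hvGv_nonneg : 0 ≤ v ⬝ᵥ G *ᵥ v := by
    simpa using (nonneg_iff_posSemidef.mp hG).dotProduct_mulVec_nonneg v
  have hvGv_pos : 0 < v ⬝ᵥ G *ᵥ v := by
    refine hvGv_nonneg.lt_of_ne fun h => ?_
    rw [← h, mul_zero] at hvv
    exact hvv_pos.ne' hvv
  have hlam : lam * (v ⬝ᵥ G *ᵥ v) ≤ v ⬝ᵥ v := by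
    have h := (Matrix.le_iff.mp hlamG).dotProduct_mulVec_nonneg v
    simp only [star_trivial, sub_mulVec, one_mulVec, smul_mulVec, dotProduct_sub,
      dotProduct_smul, smul_eq_mul] at h
    linarith
  rw [hvv] at hlam
  exact le_of_mul_le_mul_right hlam hvGv_pos

theorem Matrix.PosSemidef.exists_innerInverse_smul_le_one {n : ℕ} {A : Matrix (Fin n) (Fin n) ℝ}
    (hA : A.PosSemidef) {lam : ℝ} (hlam : ∀ μ : ℝ, μ ≠ 0 → IsEigenvalue A μ → lam ≤ μ) :
    ∃ G : Matrix (Fin n) (Fin n) ℝ, 0 ≤ G ∧ A * G * A = A ∧ lam • G ≤ 1 := by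
  have hsa : IsSelfAdjoint A := hA.isHermitian
  have hcont : ∀ f : ℝ → ℝ, ContinuousOn f (spectrum ℝ A) :=
    fun f => (Matrix.finite_spectrum A).continuousOn f
  have hspec : ∀ x ∈ spectrum ℝ A, 0 ≤ x := fun x hx => spectrum_nonneg_of_nonneg hA.nonneg hx
  -- `G = A⁺`, using `(0 : ℝ)⁻¹ = 0`
  refine ⟨cfc (·⁻¹ : ℝ → ℝ) A, cfc_nonneg fun x hx => inv_nonneg.mpr (hspec x hx), ?_, ?_⟩
  · calc A * cfc (·⁻¹) A * A = cfc id A * cfc (·⁻¹) A * cfc id A := by rw [cfc_id ℝ A]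
      _ = cfc (fun x : ℝ => x * x⁻¹ * x) A := by
        rw [← cfc_mul id (·⁻¹) A (hcont _) (hcont _), ← cfc_mul _ id A (hcont _) (hcont _)]
        rfl
      _ = cfc id A := cfc_congr fun x _ => by by_cases hx : x = 0 <;> simp [hx]
      _ = A := cfc_id ℝ A
  · rw [← sub_nonneg, ← cfc_one ℝ A, ← cfc_const_mul lam (·⁻¹) A (hcont _),
      ← cfc_sub _ _ A (hcont _) (hcont _)]
    refine cfc_nonneg fun x hx => ?_
    rcases (hspec x hx).eq_or_lt with rfl | hpos
    · simp
    · have : lam ≤ x := hlam x hpos.ne' (isEigenvalue_iff_mem_spectrum.mpr hx)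
      simpa [sub_nonneg, ← div_eq_mul_inv, div_le_one hpos]

theorem stmt_15_general {n : ℕ}
    (A : Matrix (Fin n) (Fin n) ℝ) (hA : A.PosSemidef)
    (S : Finset (Fin n))
    -- `W = (A_{S,S})†`
    (W : Matrix {j // j ∈ S} {j // j ∈ S} ℝ)
    (hW : IsMoorePenrose (A.submatrix (fun j : {j // j ∈ S} => (j : Fin n))
      (fun j : {j // j ∈ S} => (j : Fin n))) W)
    -- the Nyström residual `A°`
    (Ao : Matrix (Fin n) (Fin n) ℝ)
    (hAo : Ao = A - A.submatrix id (fun j : {j // j ∈ S} => (j : Fin n)) * W *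
      A.submatrix (fun j : {j // j ∈ S} => (j : Fin n)) id)
    -- `lamA = λmin⁺(A)`: the smallest nonzero eigenvalue of `A`
    (lamA : ℝ)
    (hlamA_min : ∀ μ : ℝ, μ ≠ 0 → IsEigenvalue A μ → lamA ≤ μ)
    -- `lamAo = λmin⁺(A°)`: the smallest nonzero eigenvalue of `A°`
    (lamAo : ℝ) (hlamAo_ne : lamAo ≠ 0) (hlamAo_eig : IsEigenvalue Ao lamAo) :
    lamA ≤ lamAo := by
  set inc : {j // j ∈ S} → Fin n := fun j => (j : Fin n)
  set E : Matrix (Fin n) {j // j ∈ S} ℝ := (1 : Matrix (Fin n) (Fin n) ℝ).submatrix id inc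
  have hA_symm : A.IsSymm := (conjTranspose_eq_transpose_of_trivial A).symm.trans hA.isHermitian
  have hW_symm : Wᵀ = W := hW.transpose_eq_of_isSymm (hA_symm.submatrix inc)
  have hAE : A.submatrix id inc = A * E := (mul_submatrix_one (Equiv.refl _) inc A).symm
  have hEA : A.submatrix inc id = Eᵀ * A := by
    rw [transpose_submatrix, transpose_one]
    exact (one_submatrix_mul inc (Equiv.refl _) A).symm
  have hEAE : A.submatrix inc inc = Eᵀ * A * E := by
    rw [← hEA]
    exact (mul_submatrix_one (Equiv.refl _) inc (A.submatrix inc id)).symm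
  rw [hAE, hEA] at hAo
  rw [hEAE] at hW
  obtain ⟨G, hG, hAGA, hlamG⟩ := hA.exists_innerInverse_smul_le_one hlamA_min
  refine hlamAo_eig.le_of_innerInverse hlamAo_ne ?_ hG ?_ hlamG
  · rw [hAo]
    refine hA_symm.sub ?_
    simp only [IsSymm, transpose_mul, transpose_transpose, hW_symm, hA_symm.eq, Matrix.mul_assoc]
  · rw [hAo]
    exact sub_mul_mul_sub_eq_self hAGA hW.2.1

/-- the Nyström residual has no smaller nonzero spectrum bottom.
For psd `A` and the Nyström residual `A° = A − A_{:,S}(A_{S,S})†A_{S,:}`, the smallest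
nonzero eigenvalue of `A°` is at least the smallest nonzero eigenvalue of `A`. -/
theorem stmt_15 {n : ℕ}
    (A : Matrix (Fin n) (Fin n) ℝ) (hA : A.PosSemidef)
    (S : Finset (Fin n))
    -- `W = (A_{S,S})†`
    (W : Matrix {j // j ∈ S} {j // j ∈ S} ℝ)
    (hW : IsMoorePenrose (A.submatrix (fun j : {j // j ∈ S} => (j : Fin n))
      (fun j : {j // j ∈ S} => (j : Fin n))) W)
    -- the Nyström residual `A°`
    (Ao : Matrix (Fin n) (Fin n) ℝ)
    (hAo : Ao = A - A.submatrix id (fun j : {j // j ∈ S} => (j : Fin n)) * W *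
      A.submatrix (fun j : {j // j ∈ S} => (j : Fin n)) id)
    -- `lamA = λmin⁺(A)`: the smallest nonzero eigenvalue of `A`
    (lamA : ℝ) (hlamA_ne : lamA ≠ 0) (hlamA_eig : IsEigenvalue A lamA)
    (hlamA_min : ∀ μ : ℝ, μ ≠ 0 → IsEigenvalue A μ → lamA ≤ μ)
    -- `lamAo = λmin⁺(A°)`: the smallest nonzero eigenvalue of `A°`
    (lamAo : ℝ) (hlamAo_ne : lamAo ≠ 0) (hlamAo_eig : IsEigenvalue Ao lamAo)
    (hlamAo_min : ∀ μ : ℝ, μ ≠ 0 → IsEigenvalue Ao μ → lamAo ≤ μ) :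
    lamA ≤ lamAo :=
  stmt_15_general A hA S W hW Ao hAo lamA hlamA_min lamAo hlamAo_ne hlamAo_eig
end
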